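/- arXiv:2405.19488 — 9 statements merged into one kernel-verified Lean document; each statement's English description precedes it below -/
import Mathlib

section
/- Let r₀ > 0, let k ≥ 1 be an integer, let α ∈ ℂ, and let c_r, c_φ ∈ ℂ be constants satisfying c_φ = i·c_r if k = 1 and c_r = c_φ = 0 if k ≠ 1. Let w_k, ρ_k : (r₀,∞) → ℂ be continuous functions such that s ↦ s^{-k+1}·(|w_k(s)| + |ρ_k(s)|) is integrable on (r₀,∞). Define for r > r₀: v_{r,k}(r) = (i/2)·r^{-k-1}·∫_{r₀}^r s^{k+1}(w_k(s) − i·ρ_k(s)) ds + (i/2)·r^{k-1}·∫_r^∞ s^{-k+1}(w_k(s) + i·ρ_k(s)) ds + α·i·r^{-k-1} + c_r, and v_{φ,k}(r) = (1/2)·r^{-k-1}·∫_{r₀}^r s^{k+1}(w_k(s) − i·ρ_k(s)) ds − (1/2)·r^{k-1}·∫_r^∞ s^{-k+1}(w_k(s) + i·ρ_k(s)) ds + α·r^{-k-1} + c_φ. Then v_{r,k} and v_{φ,k} are differentiable on (r₀,∞) and satisfy, for every r > r₀, the equations (1/r)·d/dr(r·v_{r,k}(r)) + (ik/r)·v_{φ,k}(r)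 = ρ_k(r) and (1/r)·d/dr(r·v_{φ,k}(r)) − (ik/r)·v_{r,k}(r) = w_k(r). -/
open Real MeasureTheory intervalIntegral

open Set Filter

/-!
The combinations `U = v_r + i v_φ` and `D = v_r - i v_φ` decouple the system into the two Euler
equations `(r U)' + k U = r (ρ + i w)` and `(r D)' - k D = r (ρ - i w)`, that is
`(r^(k+1) U)' = r^(k+1) (ρ + i w)` and `(r^(1-k) D)' = r^(1-k) (ρ - i w)`. Up to a factor `± i`
the two integrals are primitives of these right-hand sides (the second one taken from infinity,
which is where the integrability of `s^(1-k) (|w| + |ρ|)` enters), and `α r^(-k-1)` solves the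
homogeneous equation for `U`. The constant part `c_r + i c_φ` of `U` has to vanish, while the
constant part `c_r - i c_φ` of `D` may survive only for `k = 1`: these are the conditions on
`c_r, c_φ`.
-/

section

variable {g : ℝ → ℂ} {a r : ℝ}

theorem ContinuousOn.ofReal_zpow_mul (n : ℤ) (ha : 0 ≤ a) (hg : ContinuousOn g (Ioi a)) :
    ContinuousOn (fun x : ℝ => ((x ^ n : ℝ) : ℂ) * g x) (Ioi a) :=
  (Complex.continuous_ofReal.comp_continuousOn
    ((continuousOn_zpow₀ n).mono fun _ hx => (ha.trans_lt hx).ne')).mul hg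

theorem integrableOn_ofReal_zpow_mul_of_norm_le {h : ℝ → ℝ} {m : ℤ} (ha : 0 ≤ a)
    (hg : ContinuousOn g (Ioi a)) (hgh : ∀ x ∈ Ioi a, ‖g x‖ ≤ h x)
    (hh : IntegrableOn (fun x => x ^ m * h x) (Ioi a)) :
    IntegrableOn (fun x : ℝ => ((x ^ m : ℝ) : ℂ) * g x) (Ioi a) := by
  refine hh.mono' ((hg.ofReal_zpow_mul m ha).aestronglyMeasurable measurableSet_Ioi) ?_
  refine ae_restrict_of_forall_mem measurableSet_Ioi fun x hx => ?_
  have hxm : 0 ≤ x ^ m := (zpow_pos (ha.trans_lt hx) m).le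
  rw [norm_mul, Complex.norm_real, norm_of_nonneg hxm]
  exact mul_le_mul_of_nonneg_left (hgh x hx) hxm

theorem IntegrableOn.ofReal_zpow_mul_Ioc {b : ℝ} {m : ℤ} (n : ℤ) (ha : 0 < a)
    (hg : IntegrableOn (fun x : ℝ => ((x ^ m : ℝ) : ℂ) * g x) (Ioc a b)) :
    IntegrableOn (fun x : ℝ => ((x ^ n : ℝ) : ℂ) * g x) (Ioc a b) := by
  have hcont : ContinuousOn (fun x : ℝ => ((x ^ (n - m) : ℝ) : ℂ)) (Icc a b) :=
    Complex.continuous_ofReal.comp_continuousOn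
      ((continuousOn_zpow₀ _).mono fun _ hx => (ha.trans_le hx.1).ne')
  refine (hg.continuousOn_mul_of_subset hcont isCompact_Icc measurableSet_Ioc
    Ioc_subset_Icc_self).congr_fun (fun x hx => ?_) measurableSet_Ioc
  dsimp only
  rw [← mul_assoc, ← Complex.ofReal_mul, ← zpow_add₀ (ha.trans hx.1).ne', sub_add_cancel]

theorem hasDerivAt_integral_ofReal_zpow_mul {m : ℤ} (n : ℤ) (ha : 0 < a) (har : a < r)
    (hg : ContinuousOn g (Ioi a))
    (hint : IntegrableOn (fun x : ℝ => ((x ^ m : ℝ) : ℂ) * g x) (Ioi a)) :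
    HasDerivAt (fun x => ∫ s in a..x, ((s ^ n : ℝ) : ℂ) * g s)
      (((r ^ n : ℝ) : ℂ) * g r) r := by
  have hcont := hg.ofReal_zpow_mul n ha.le
  refine integral_hasDerivAt_right ?_ (hcont.stronglyMeasurableAtFilter isOpen_Ioi r har)
    (hcont.continuousAt (Ioi_mem_nhds har))
  rw [intervalIntegrable_iff_integrableOn_Ioc_of_le har.le]
  exact IntegrableOn.ofReal_zpow_mul_Ioc n ha (hint.mono_set Ioc_subset_Ioi_self)

theorem hasDerivAt_integral_Ioi {E : Type*} [NormedAddCommGroup E] [NormedSpace ℝ E]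
    [CompleteSpace E] {f : ℝ → E} (hf : IntegrableOn f (Ioi a)) (hcont : ContinuousOn f (Ioi a))
    (har : a < r) :
    HasDerivAt (fun x => ∫ s in Ioi x, f s) (-f r) r := by
  have hFTC := integral_hasDerivAt_right
    ((intervalIntegrable_iff_integrableOn_Ioc_of_le har.le).2 (hf.mono_set Ioc_subset_Ioi_self))
    (hcont.stronglyMeasurableAtFilter isOpen_Ioi r har) (hcont.continuousAt (Ioi_mem_nhds har))
  refine (hFTC.const_sub (∫ s in Ioi a, f s)).congr_of_eventuallyEq ?_
  filter_upwards [Ioi_mem_nhds har] with x hx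
  rw [← integral_Ioi_sub_Ioi hf hx.le, sub_sub_cancel]

theorem hasDerivAt_ofReal_mul_zpow_mul_add {G : ℝ → ℂ} {g : ℂ} (n : ℤ) (c : ℂ)
    (hr : r ≠ 0)
    (hG : HasDerivAt G (((r ^ (1 - n) : ℝ) : ℂ) * g) r) :
    DifferentiableAt ℝ (fun t : ℝ => ((t ^ (n - 1) : ℝ) : ℂ) * G t + c) r ∧
    HasDerivAt (fun t : ℝ => (t : ℂ) * (((t ^ (n - 1) : ℝ) : ℂ) * G t + c))
      (n * (((r ^ (n - 1) : ℝ) : ℂ) * G r + c) + r * g + (1 - n) * c) r := by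
  have hV := (((hasDerivAt_zpow (n - 1) r (Or.inl hr)).ofReal_comp).mul hG).add_const c
  refine ⟨hV.differentiableAt, ?_⟩
  refine ((hasDerivAt_id r).ofReal_comp.mul hV).congr_deriv ?_
  have hr' : (r : ℂ) ≠ 0 := Complex.ofReal_ne_zero.2 hr
  simp only [Pi.mul_apply, id]
  push_cast
  rw [zpow_sub_one₀ hr' (n - 1), show (1 : ℤ) - n = -(n - 1) by ring, zpow_neg]
  have hp : (r : ℂ) ^ (n - 1) ≠ 0 := zpow_ne_zero _ hr'
  generalize (r : ℂ) ^ (n - 1) = p at hp ⊢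
  field_simp
  ring

theorem divCurl_of_decoupled {vr vφ U D : ℝ → ℂ} {U' D' k a b : ℂ} (hr : r ≠ 0)
    (hU_def : ∀ t, U t = vr t + Complex.I * vφ t)
    (hD_def : ∀ t, D t = vr t - Complex.I * vφ t)
    (hUd : DifferentiableAt ℝ U r) (hDd : DifferentiableAt ℝ D r)
    (hU : HasDerivAt (fun t : ℝ => (t : ℂ) * U t) U' r)
    (hD : HasDerivAt (fun t : ℝ => (t : ℂ) * D t) D' r)
    (hUeq : U' + k * U r = r * (a + Complex.I * b))
    (hDeq : D' - k * D r = r * (a - Complex.I * b)) :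
    DifferentiableAt ℝ vr r ∧ DifferentiableAt ℝ vφ r ∧
      (1 / (r : ℂ)) * deriv (fun t : ℝ => (t : ℂ) * vr t) r
          + (Complex.I * k / (r : ℂ)) * vφ r = a ∧
      (1 / (r : ℂ)) * deriv (fun t : ℝ => (t : ℂ) * vφ t) r
          - (Complex.I * k / (r : ℂ)) * vr r = b := by
  obtain rfl : vr = fun t => (U t + D t) / 2 :=
    funext fun t => by linear_combination -(hU_def t + hD_def t) / 2
  obtain rfl : vφ = fun t => Complex.I * (D t - U t) / 2 :=
    funext fun t => by
      linear_combination -Complex.I * (hD_def t - hU_def t) / 2 + vφ t * Complex.I_sq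
  have hr' : (r : ℂ) ≠ 0 := Complex.ofReal_ne_zero.2 hr
  have hvr' : HasDerivAt (fun t : ℝ => (t : ℂ) * ((U t + D t) / 2)) ((U' + D') / 2) r := by
    refine ((hU.add hD).div_const 2).congr_of_eventuallyEq (Eventually.of_forall fun t => ?_)
    simp only [Pi.add_apply]
    ring
  have hvφ' : HasDerivAt (fun t : ℝ => (t : ℂ) * (Complex.I * (D t - U t) / 2))
      (Complex.I * (D' - U') / 2) r := by
    refine (((hD.sub hU).const_mul Complex.I).div_const 2).congr_of_eventuallyEq
      (Eventually.of_forall fun t => ?_)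
    simp only [Pi.sub_apply]
    ring
  refine ⟨(hUd.add hDd).div_const 2, ((hDd.sub hUd).const_mul Complex.I).div_const 2, ?_, ?_⟩
  · rw [hvr'.deriv]
    field_simp
    linear_combination hUeq + hDeq + k * (D r - U r) * Complex.I_sq
  · rw [hvφ'.deriv]
    field_simp
    linear_combination Complex.I * (hDeq - hUeq) - 2 * r * b * Complex.I_sq

end

theorem divcurl_fourier_mode_solution_general (r₀ : ℝ) (hr₀ : 0 < r₀) (k : ℤ)
    (α cr cφ : ℂ)
    (hc1 : k = 1 → cφ = Complex.I * cr)
    (hc2 : k ≠ 1 → cr = 0 ∧ cφ = 0)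
    (w ρ : ℝ → ℂ)
    (hw : ContinuousOn w (Set.Ioi r₀)) (hρ : ContinuousOn ρ (Set.Ioi r₀))
    (hint : IntegrableOn (fun s : ℝ => s ^ (-k + 1) * (‖w s‖ + ‖ρ s‖)) (Set.Ioi r₀))
    (vr vφ : ℝ → ℂ)
    (hvr : ∀ r : ℝ, vr r =
      (Complex.I / 2) * ((r ^ (-k - 1) : ℝ) : ℂ) *
          (∫ s in r₀..r, ((s ^ (k + 1) : ℝ) : ℂ) * (w s - Complex.I * ρ s))
        + (Complex.I / 2) * ((r ^ (k - 1) : ℝ) : ℂ) *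
          (∫ s in Set.Ioi r, ((s ^ (-k + 1) : ℝ) : ℂ) * (w s + Complex.I * ρ s))
        + α * Complex.I * ((r ^ (-k - 1) : ℝ) : ℂ) + cr)
    (hvφ : ∀ r : ℝ, vφ r =
      (1 / 2 : ℂ) * ((r ^ (-k - 1) : ℝ) : ℂ) *
          (∫ s in r₀..r, ((s ^ (k + 1) : ℝ) : ℂ) * (w s - Complex.I * ρ s))
        - (1 / 2 : ℂ) * ((r ^ (k - 1) : ℝ) : ℂ) *
          (∫ s in Set.Ioi r, ((s ^ (-k + 1) : ℝ) : ℂ) * (w s + Complex.I * ρ s))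
        + α * ((r ^ (-k - 1) : ℝ) : ℂ) + cφ) :
    ∀ r ∈ Set.Ioi r₀,
      DifferentiableAt ℝ vr r ∧ DifferentiableAt ℝ vφ r ∧
      (1 / (r : ℂ)) * deriv (fun t : ℝ => (t : ℂ) * vr t) r
          + (Complex.I * (k : ℂ) / (r : ℂ)) * vφ r = ρ r ∧
      (1 / (r : ℂ)) * deriv (fun t : ℝ => (t : ℂ) * vφ t) r
          - (Complex.I * (k : ℂ) / (r : ℂ)) * vr r = w r := by
  intro r hr
  have hr0 : r ≠ 0 := (hr₀.trans hr).ne'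
  have hU_const : cr + Complex.I * cφ = 0 := by
    rcases eq_or_ne k 1 with hk | hk
    · rw [hc1 hk]; linear_combination cr * Complex.I_sq
    · simp [hc2 hk]
  have hD_const : (1 - k : ℂ) * (cr - Complex.I * cφ) = 0 := by
    rcases eq_or_ne k 1 with hk | hk
    · simp [hk]
    · simp [hc2 hk]
  have hcont_sub : ContinuousOn (fun s => w s - Complex.I * ρ s) (Ioi r₀) :=
    hw.sub (continuousOn_const.mul hρ)
  have hcont_add : ContinuousOn (fun s => w s + Complex.I * ρ s) (Ioi r₀) :=
    hw.add (continuousOn_const.mul hρ)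
  have hP := hasDerivAt_integral_ofReal_zpow_mul (k + 1) hr₀ hr hcont_sub
    (integrableOn_ofReal_zpow_mul_of_norm_le hr₀.le hcont_sub
      (fun x _ => (norm_sub_le _ _).trans_eq (by simp)) hint)
  have hQ := hasDerivAt_integral_Ioi
    (integrableOn_ofReal_zpow_mul_of_norm_le hr₀.le hcont_add
      (fun x _ => (norm_add_le _ _).trans_eq (by simp)) hint)
    (hcont_add.ofReal_zpow_mul _ hr₀.le) hr
  obtain ⟨hUd, hU⟩ := hasDerivAt_ofReal_mul_zpow_mul_add (-k) (cr + Complex.I * cφ) hr0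
    (g := ρ r + Complex.I * w r) <| ((hP.add_const (2 * α)).const_mul Complex.I).congr_deriv <| by
      rw [show 1 - -k = k + 1 by ring]
      linear_combination -((r ^ (k + 1) : ℝ) : ℂ) * ρ r * Complex.I_sq
  obtain ⟨hDd, hD⟩ := hasDerivAt_ofReal_mul_zpow_mul_add k (cr - Complex.I * cφ) hr0
    (g := ρ r - Complex.I * w r) <| (hQ.const_mul Complex.I).congr_deriv <| by
      rw [show 1 - k = -k + 1 by ring]
      linear_combination -((r ^ (-k + 1) : ℝ) : ℂ) * ρ r * Complex.I_sq
  refine divCurl_of_decoupled hr0 (fun t => ?_) (fun t => ?_) hUd hDd hU hD ?_ ?_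
  · rw [hvr, hvφ]; ring
  · rw [hvr, hvφ]; ring
  · push_cast; linear_combination (1 + k : ℂ) * hU_const
  · push_cast; linear_combination hD_const

/-- the explicit Fourier-mode formulas solve the div-curl ODE
system in the exterior of the disk of radius `r₀`. -/
theorem divcurl_fourier_mode_solution (r₀ : ℝ) (hr₀ : 0 < r₀) (k : ℤ) (hk : 1 ≤ k)
    (α cr cφ : ℂ)
    (hc1 : k = 1 → cφ = Complex.I * cr)
    (hc2 : k ≠ 1 → cr = 0 ∧ cφ = 0)
    (w ρ : ℝ → ℂ)
    (hw : ContinuousOn w (Set.Ioi r₀)) (hρ : ContinuousOn ρ (Set.Ioi r₀))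
    (hint : IntegrableOn (fun s : ℝ => s ^ (-k + 1) * (‖w s‖ + ‖ρ s‖)) (Set.Ioi r₀))
    (vr vφ : ℝ → ℂ)
    (hvr : ∀ r : ℝ, vr r =
      (Complex.I / 2) * ((r ^ (-k - 1) : ℝ) : ℂ) *
          (∫ s in r₀..r, ((s ^ (k + 1) : ℝ) : ℂ) * (w s - Complex.I * ρ s))
        + (Complex.I / 2) * ((r ^ (k - 1) : ℝ) : ℂ) *
          (∫ s in Set.Ioi r, ((s ^ (-k + 1) : ℝ) : ℂ) * (w s + Complex.I * ρ s))
        + α * Complex.I * ((r ^ (-k - 1) : ℝ) : ℂ) + cr)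
    (hvφ : ∀ r : ℝ, vφ r =
      (1 / 2 : ℂ) * ((r ^ (-k - 1) : ℝ) : ℂ) *
          (∫ s in r₀..r, ((s ^ (k + 1) : ℝ) : ℂ) * (w s - Complex.I * ρ s))
        - (1 / 2 : ℂ) * ((r ^ (k - 1) : ℝ) : ℂ) *
          (∫ s in Set.Ioi r, ((s ^ (-k + 1) : ℝ) : ℂ) * (w s + Complex.I * ρ s))
        + α * ((r ^ (-k - 1) : ℝ) : ℂ) + cφ) :
    ∀ r ∈ Set.Ioi r₀,
      DifferentiableAt ℝ vr r ∧ DifferentiableAt ℝ vφ r ∧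
      (1 / (r : ℂ)) * deriv (fun t : ℝ => (t : ℂ) * vr t) r
          + (Complex.I * (k : ℂ) / (r : ℂ)) * vφ r = ρ r ∧
      (1 / (r : ℂ)) * deriv (fun t : ℝ => (t : ℂ) * vφ t) r
          - (Complex.I * (k : ℂ) / (r : ℂ)) * vr r = w r :=
  divcurl_fourier_mode_solution_general r₀ hr₀ k α cr cφ hc1 hc2 w ρ hw hρ hint vr vφ hvr hvφ
end

section
/- Let r₀ > 0, let k ≥ 1 be an integer, let α ∈ ℂ, let c_r, c_φ ∈ ℂ satisfy c_φ = i·c_r if k = 1 and c_r = c_φ = 0 if k ≠ 1, and let w_k, ρ_k : [r₀,∞) → ℂ be continuous with s ↦ s^{-k+1}·(|w_k(s)| + |ρ_k(s)|) integrable on (r₀,∞). Define v_{r,k}(r) and v_{φ,k}(r) for r ≥ r₀ by the formulas v_{r,k}(r) = (i/2)·r^{-k-1}·∫_{r₀}^r s^{k+1}(w_k − i·ρ_k) ds + (i/2)·r^{k-1}·∫_r^∞ s^{-k+1}(w_k + i·ρ_k) ds + α·i·r^{-k-1} + c_r and v_{φ,k}(r) = (1/2)·r^{-k-1}·∫_{r₀}^r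 s^{k+1}(w_k − i·ρ_k) ds − (1/2)·r^{k-1}·∫_r^∞ s^{-k+1}(w_k + i·ρ_k) ds + α·r^{-k-1} + c_φ. Suppose g_r, g_φ ∈ ℂ are such that v_{r,k}(r₀) = g_r and v_{φ,k}(r₀) = g_φ. Then necessarily α = (r₀^{k+1}/2)·(g_φ − i·g_r), and the compatibility condition r₀^{k-1}·∫_{r₀}^∞ s^{-k+1}·(w_k(s) + i·ρ_k(s)) ds + g_φ + i·g_r = c_φ + i·c_r holds. -/
open Real MeasureTheory intervalIntegral

/-! At `r = r₀` the integral over `[r₀, r]` vanishes, so the two boundary conditions are linear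
in `a = r₀^{k-1} ∫_{r₀}^∞ …` and `b = α r₀^{-k-1}`. The combinations `g_φ ∓ i g_r` decouple them:
`g_φ - i g_r = 2b` because `c_φ = i c_r`, and `a + g_φ + i g_r = c_φ + i c_r`. -/

open Complex in
lemma boundary_system_decouple {a b cr cφ gr gφ : ℂ}
    (hgr : gr = I / 2 * a + I * b + cr) (hgφ : gφ = -(1 / 2) * a + b + cφ) :
    gφ - I * gr = 2 * b + (cφ - I * cr) ∧ a + gφ + I * gr = cφ + I * cr := by
  constructor
  · linear_combination hgφ - I * hgr - (a / 2 + b) * I_mul_I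
  · linear_combination hgφ + I * hgr + (a / 2 + b) * I_mul_I

lemma constant_flow_phi_eq_I_mul_r {k : ℤ} {cr cφ : ℂ}
    (hc1 : k = 1 → cφ = Complex.I * cr) (hc2 : k ≠ 1 → cr = 0 ∧ cφ = 0) :
    cφ = Complex.I * cr := by
  by_cases hk : k = 1
  · exact hc1 hk
  · obtain ⟨rfl, rfl⟩ := hc2 hk
    simp

lemma zpow_add_one_mul_zpow_neg_sub_one {r : ℝ} (hr : r ≠ 0) (k : ℤ) :
    r ^ (k + 1) * r ^ (-k - 1) = 1 := by
  rw [show -k - 1 = -(k + 1) by ring, zpow_neg, mul_inv_cancel₀ (zpow_ne_zero _ hr)]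

theorem divcurl_fourier_mode_boundary_compatibility_general (r₀ : ℝ) (hr₀ : 0 < r₀)
    (k : ℤ) (α cr cφ : ℂ)
    (hc1 : k = 1 → cφ = Complex.I * cr)
    (hc2 : k ≠ 1 → cr = 0 ∧ cφ = 0)
    (w ρ : ℝ → ℂ)
    (vr vφ : ℝ → ℂ)
    (hvr : ∀ r : ℝ, vr r =
      (Complex.I / 2) * ((r ^ (-k - 1) : ℝ) : ℂ) *
          (∫ s in r₀..r, ((s ^ (k + 1) : ℝ) : ℂ) * (w s - Complex.I * ρ s))
        + (Complex.I / 2) * ((r ^ (k - 1) : ℝ) : ℂ) *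
          (∫ s in Set.Ioi r, ((s ^ (-k + 1) : ℝ) : ℂ) * (w s + Complex.I * ρ s))
        + α * Complex.I * ((r ^ (-k - 1) : ℝ) : ℂ) + cr)
    (hvφ : ∀ r : ℝ, vφ r =
      (1 / 2 : ℂ) * ((r ^ (-k - 1) : ℝ) : ℂ) *
          (∫ s in r₀..r, ((s ^ (k + 1) : ℝ) : ℂ) * (w s - Complex.I * ρ s))
        - (1 / 2 : ℂ) * ((r ^ (k - 1) : ℝ) : ℂ) *
          (∫ s in Set.Ioi r, ((s ^ (-k + 1) : ℝ) : ℂ) * (w s + Complex.I * ρ s))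
        + α * ((r ^ (-k - 1) : ℝ) : ℂ) + cφ)
    (gr gφ : ℂ) (hgr : vr r₀ = gr) (hgφ : vφ r₀ = gφ) :
    α = ((r₀ ^ (k + 1) : ℝ) : ℂ) / 2 * (gφ - Complex.I * gr) ∧
    ((r₀ ^ (k - 1) : ℝ) : ℂ) *
        (∫ s in Set.Ioi r₀, ((s ^ (-k + 1) : ℝ) : ℂ) * (w s + Complex.I * ρ s))
      + gφ + Complex.I * gr = cφ + Complex.I * cr := by
  set a := ((r₀ ^ (k - 1) : ℝ) : ℂ) *
    ∫ s in Set.Ioi r₀, ((s ^ (-k + 1) : ℝ) : ℂ) * (w s + Complex.I * ρ s)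
  set b := α * ((r₀ ^ (-k - 1) : ℝ) : ℂ)
  have hgr' : gr = Complex.I / 2 * a + Complex.I * b + cr := by
    rw [← hgr, hvr, integral_same]; ring
  have hgφ' : gφ = -(1 / 2) * a + b + cφ := by
    rw [← hgφ, hvφ, integral_same]; ring
  obtain ⟨hdiff, hsum⟩ := boundary_system_decouple hgr' hgφ'
  have hc : cφ = Complex.I * cr := constant_flow_phi_eq_I_mul_r hc1 hc2
  have hinv : ((r₀ ^ (k + 1) : ℝ) : ℂ) * ((r₀ ^ (-k - 1) : ℝ) : ℂ) = 1 := by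
    exact_mod_cast zpow_add_one_mul_zpow_neg_sub_one hr₀.ne' k
  refine ⟨?_, hsum⟩
  rw [hdiff, hc, sub_self, add_zero]
  linear_combination -α * hinv

/-- matching the explicit Fourier-mode solution with Dirichlet
boundary data `g_r, g_φ` on the circle of radius `r₀` determines the constant
`α` and forces the compatibility (orthogonality) condition at mode `k`. -/
theorem divcurl_fourier_mode_boundary_compatibility (r₀ : ℝ) (hr₀ : 0 < r₀)
    (k : ℤ) (hk : 1 ≤ k) (α cr cφ : ℂ)
    (hc1 : k = 1 → cφ = Complex.I * cr)
    (hc2 : k ≠ 1 → cr = 0 ∧ cφ = 0)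
    (w ρ : ℝ → ℂ)
    (hw : ContinuousOn w (Set.Ici r₀)) (hρ : ContinuousOn ρ (Set.Ici r₀))
    (hint : IntegrableOn (fun s : ℝ => s ^ (-k + 1) * (‖w s‖ + ‖ρ s‖)) (Set.Ioi r₀))
    (vr vφ : ℝ → ℂ)
    (hvr : ∀ r : ℝ, vr r =
      (Complex.I / 2) * ((r ^ (-k - 1) : ℝ) : ℂ) *
          (∫ s in r₀..r, ((s ^ (k + 1) : ℝ) : ℂ) * (w s - Complex.I * ρ s))
        + (Complex.I / 2) * ((r ^ (k - 1) : ℝ) : ℂ) *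
          (∫ s in Set.Ioi r, ((s ^ (-k + 1) : ℝ) : ℂ) * (w s + Complex.I * ρ s))
        + α * Complex.I * ((r ^ (-k - 1) : ℝ) : ℂ) + cr)
    (hvφ : ∀ r : ℝ, vφ r =
      (1 / 2 : ℂ) * ((r ^ (-k - 1) : ℝ) : ℂ) *
          (∫ s in r₀..r, ((s ^ (k + 1) : ℝ) : ℂ) * (w s - Complex.I * ρ s))
        - (1 / 2 : ℂ) * ((r ^ (k - 1) : ℝ) : ℂ) *
          (∫ s in Set.Ioi r, ((s ^ (-k + 1) : ℝ) : ℂ) * (w s + Complex.I * ρ s))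
        + α * ((r ^ (-k - 1) : ℝ) : ℂ) + cφ)
    (gr gφ : ℂ) (hgr : vr r₀ = gr) (hgφ : vφ r₀ = gφ) :
    α = ((r₀ ^ (k + 1) : ℝ) : ℂ) / 2 * (gφ - Complex.I * gr) ∧
    ((r₀ ^ (k - 1) : ℝ) : ℂ) *
        (∫ s in Set.Ioi r₀, ((s ^ (-k + 1) : ℝ) : ℂ) * (w s + Complex.I * ρ s))
      + gφ + Complex.I * gr = cφ + Complex.I * cr :=
  divcurl_fourier_mode_boundary_compatibility_general r₀ hr₀ k α cr cφ hc1 hc2 w ρ vr vφ hvr hvφ gr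
    gφ hgr hgφ
end

section
/- Let r₀ > 0, let N > 0 be real, let k ≥ 1 be an integer with k + 1 ≠ N, and let w : (r₀,∞) → ℂ be measurable with ‖w‖²_{L_{2,N}(r₀,∞)} = ∫_{r₀}^∞ |w(s)|²·(1+s²)^N·s ds < ∞. Then for every r ≥ r₀ the function s ↦ s^{k+1}·w(s) is integrable on (r₀,r) and | r^{-k-1}·∫_{r₀}^r s^{k+1}·w(s) ds | ≤ (1/√|2k + 2 − 2N|)·‖w‖_{L_{2,N}(r₀,∞)}·( r^{-N} + (r₀/r)^{k+1}·r₀^{-N} ). -/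
open Real MeasureTheory intervalIntegral

private lemma sqrt_add_le_aux {x y : ℝ} (hx : 0 ≤ x) (hy : 0 ≤ y) :
    Real.sqrt (x + y) ≤ Real.sqrt x + Real.sqrt y := by
  rw [Real.sqrt_le_iff]
  constructor
  · positivity
  · nlinarith [Real.sq_sqrt hx, Real.sq_sqrt hy, Real.sqrt_nonneg x, Real.sqrt_nonneg y,
      mul_nonneg (Real.sqrt_nonneg x) (Real.sqrt_nonneg y)]

set_option maxHeartbeats 1000000 in
/-- pointwise bound for the first term
`r^{-k-1}·∫_{r₀}^r s^{k+1}·w(s) ds` of the Fourier-mode solution, in terms of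
the weighted norm `‖w‖_{L_{2,N}(r₀,∞)}`, when `k + 1 ≠ N`. -/
theorem first_term_pointwise_bound (r₀ N : ℝ) (hr₀ : 0 < r₀) (hN : 0 < N)
    (k : ℕ) (hk : 1 ≤ k) (hkN : (k : ℝ) + 1 ≠ N)
    (w : ℝ → ℂ) (hw : Measurable w)
    (hwL : IntegrableOn (fun s : ℝ => ‖w s‖ ^ 2 * (1 + s ^ 2) ^ N * s) (Set.Ioi r₀)) :
    ∀ r : ℝ, r₀ ≤ r →
      IntegrableOn (fun s : ℝ => ((s ^ (k + 1) : ℝ) : ℂ) * w s) (Set.Ioc r₀ r) ∧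
      ‖((r ^ (-(k : ℤ) - 1) : ℝ) : ℂ) *
            ∫ s in r₀..r, ((s ^ (k + 1) : ℝ) : ℂ) * w s‖ ≤
        (1 / Real.sqrt |2 * (k : ℝ) + 2 - 2 * N|) *
          Real.sqrt (∫ s in Set.Ioi r₀, ‖w s‖ ^ 2 * (1 + s ^ 2) ^ N * s) *
          (r ^ (-N) + (r₀ / r) ^ (k + 1) * r₀ ^ (-N)) := by
  intro r hr
  have hr0 : 0 < r := hr₀.trans_le hr
  set M : ℝ := ∫ s in Set.Ioi r₀, ‖w s‖ ^ 2 * (1 + s ^ 2) ^ N * s with hMdef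
  set b : ℝ := 2 * (k : ℝ) + 2 - 2 * N with hbdef
  have hbne : b ≠ 0 := by
    intro h
    apply hkN
    rw [hbdef] at h
    linarith
  set β : ℝ := (k : ℝ) + 1 - N with hβdef
  -- the weight
  set φ : ℝ → ℝ := fun s => (1 + s ^ 2) ^ N * s with hφdef
  have hφpos : ∀ s : ℝ, 0 < s → 0 < φ s := by
    intro s hs
    have h1 : (0 : ℝ) < (1 + s ^ 2) ^ N := Real.rpow_pos_of_pos (by positivity) N
    exact mul_pos h1 hs
  have hc1 : Continuous fun s : ℝ => (1 + s ^ 2) ^ N :=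
    (continuous_const.add (continuous_pow 2)).rpow_const fun x => Or.inr hN.le
  have hφc : Continuous φ := hc1.mul continuous_id
  set f : ℝ → ℝ := fun s => ‖w s‖ * Real.sqrt (φ s) with hfdef
  set g : ℝ → ℝ := fun s => s ^ (k + 1) / Real.sqrt (φ s) with hgdef
  set μ := volume.restrict (Set.Ioc r₀ r) with hμdef
  have haeA : ∀ᵐ s ∂μ, s ∈ Set.Ioc r₀ r := ae_restrict_mem measurableSet_Ioc
  have hfm : Measurable f := hw.norm.mul (Real.continuous_sqrt.comp hφc).measurable
  have hgm : Measurable g :=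
    (measurable_id.pow_const (k + 1)).div (Real.continuous_sqrt.comp hφc).measurable
  -- f² agrees a.e. with the weighted integrand
  have hfsq : (fun s : ℝ => ‖w s‖ ^ 2 * (1 + s ^ 2) ^ N * s) =ᵐ[μ] fun s => f s ^ 2 := by
    filter_upwards [haeA] with s hs
    have hs0 : 0 < s := hr₀.trans hs.1
    simp only [hfdef, mul_pow, Real.sq_sqrt (hφpos s hs0).le, hφdef]
    rw [Real.sq_sqrt (mul_nonneg (by positivity) hs0.le)]
    ring
  have hf2int : Integrable (fun s => f s ^ 2) μ :=
    ((hwL.mono_set Set.Ioc_subset_Ioi_self).congr hfsq)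
  -- g² is integrable (continuous on the compact interval)
  have hgc : ContinuousOn g (Set.Icc r₀ r) := by
    apply ContinuousOn.div (Continuous.continuousOn (by continuity))
      (Real.continuous_sqrt.comp hφc).continuousOn
    intro s hs
    exact (Real.sqrt_ne_zero'.2 (hφpos s (hr₀.trans_le hs.1)))
  have hg2int : Integrable (fun s => g s ^ 2) μ :=
    ((hgc.pow 2).integrableOn_Icc).mono_set Set.Ioc_subset_Icc_self
  -- the product f·g equals s^{k+1}·‖w s‖ on the interval
  have hfg : ∀ s ∈ Set.Ioc r₀ r, f s * g s = s ^ (k + 1) * ‖w s‖ := by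
    intro s hs
    have hs0 : 0 < s := hr₀.trans hs.1
    have h1 : Real.sqrt (φ s) ≠ 0 := ne_of_gt (Real.sqrt_pos.2 (hφpos s hs0))
    simp only [hfdef, hgdef]
    field_simp
  -- integrability of f·g
  have hFGint : Integrable (fun s => f s * g s) μ := by
    refine Integrable.mono' ((hf2int.add hg2int).const_mul (1 / 2))
      (hfm.mul hgm).aestronglyMeasurable ?_
    filter_upwards with s
    simp only [Pi.add_apply]
    rw [Real.norm_eq_abs]
    rcases abs_cases (f s * g s) with ⟨h1, _⟩ | ⟨h1, _⟩ <;> rw [h1] <;>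
      nlinarith [sq_nonneg (f s - g s), sq_nonneg (f s + g s)]
  -- integrability of the target
  have hTint : IntegrableOn (fun s : ℝ => ((s ^ (k + 1) : ℝ) : ℂ) * w s) (Set.Ioc r₀ r) := by
    refine hFGint.mono'
      ((Complex.measurable_ofReal.comp (measurable_id.pow_const (k + 1))).mul
        hw).aestronglyMeasurable ?_
    filter_upwards [haeA] with s hs
    have hs0 : 0 < s := hr₀.trans hs.1
    rw [norm_mul, Complex.norm_real, Real.norm_of_nonneg (pow_nonneg hs0.le _),
      hfg s hs]
  refine ⟨hTint, ?_⟩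
  -- Hölder / Cauchy–Schwarz
  have hpq : Real.HolderConjugate 2 2 := (Real.holderConjugate_iff_eq_conjExponent one_lt_two).2 (by norm_num)
  have hfnn : 0 ≤ᵐ[μ] f :=
    Filter.Eventually.of_forall fun s => mul_nonneg (norm_nonneg _) (Real.sqrt_nonneg _)
  have hgnn : 0 ≤ᵐ[μ] g := by
    filter_upwards [haeA] with s hs
    exact div_nonneg (pow_nonneg (hr₀.trans hs.1).le _) (Real.sqrt_nonneg _)
  have hofreal : ENNReal.ofReal (2 : ℝ) = 2 := by norm_num
  have hfmem : MemLp f (ENNReal.ofReal (2 : ℝ)) μ := by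
    rw [hofreal]
    exact (memLp_two_iff_integrable_sq hfm.aestronglyMeasurable).2 hf2int
  have hgmem : MemLp g (ENNReal.ofReal (2 : ℝ)) μ := by
    rw [hofreal]
    exact (memLp_two_iff_integrable_sq hgm.aestronglyMeasurable).2 hg2int
  have holder := MeasureTheory.integral_mul_le_Lp_mul_Lq_of_nonneg hpq hfnn hgnn hfmem hgmem
  simp only [Real.rpow_two] at holder
  rw [← Real.sqrt_eq_rpow, ← Real.sqrt_eq_rpow] at holder
  -- bound the f² integral by M
  have hwnn : 0 ≤ᵐ[volume.restrict (Set.Ioi r₀)]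
      fun s : ℝ => ‖w s‖ ^ 2 * (1 + s ^ 2) ^ N * s := by
    filter_upwards [ae_restrict_mem measurableSet_Ioi] with s hs
    have hs0 : 0 < s := hr₀.trans hs
    have h1 : (0 : ℝ) < (1 + s ^ 2) ^ N := Real.rpow_pos_of_pos (by positivity) N
    positivity
  have hMnn : 0 ≤ M := integral_nonneg_of_ae hwnn
  have hSfM : ∫ s, f s ^ 2 ∂μ ≤ M := by
    rw [← integral_congr_ae hfsq]
    exact setIntegral_mono_set hwL hwnn (HasSubset.Subset.eventuallyLE Set.Ioc_subset_Ioi_self)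
  -- bound g² pointwise by s^(b-1)
  have hgsq_le : ∀ s ∈ Set.Ioc r₀ r, g s ^ 2 ≤ s ^ (b - 1) := by
    intro s hs
    have hs0 : 0 < s := hr₀.trans hs.1
    have hφ_ge : s ^ (2 * N + 1) ≤ φ s := by
      have h1 : s ^ (2 * N) ≤ (1 + s ^ 2) ^ N := by
        have h2 : s ^ (2 * N) = (s ^ 2) ^ N := by
          rw [← Real.rpow_natCast s 2, ← Real.rpow_mul hs0.le]
          norm_num
        rw [h2]
        exact Real.rpow_le_rpow (by positivity) (by linarith [sq_nonneg s]) hN.le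
      calc s ^ (2 * N + 1) = s ^ (2 * N) * s := by
            rw [Real.rpow_add hs0, Real.rpow_one]
        _ ≤ φ s := mul_le_mul_of_nonneg_right h1 hs0.le
    have hgs : g s ^ 2 = (s ^ (k + 1) : ℝ) ^ 2 / φ s := by
      rw [hgdef, div_pow, Real.sq_sqrt (hφpos s hs0).le]
    rw [hgs]
    have h2 : (s ^ (k + 1) : ℝ) ^ 2 / φ s ≤ (s ^ (k + 1) : ℝ) ^ 2 / s ^ (2 * N + 1) := by
      gcongr
      all_goals first
        | exact sq_nonneg _
        | exact Real.rpow_pos_of_pos hs0 _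
        | exact hφ_ge
        | positivity
    refine h2.trans_eq ?_
    rw [← pow_mul, ← Real.rpow_natCast s ((k + 1) * 2), ← Real.rpow_sub hs0]
    congr 1
    push_cast
    rw [hbdef]
    ring
  -- integrability of s^(b-1) on the interval
  have hrpow_int : IntegrableOn (fun s : ℝ => s ^ (b - 1)) (Set.Icc r₀ r) := by
    apply ContinuousOn.integrableOn_Icc
    intro s hs
    exact (Real.continuousAt_rpow_const s (b - 1)
      (Or.inl (ne_of_gt (hr₀.trans_le hs.1)))).continuousWithinAt
  have hSg_le1 : ∫ s, g s ^ 2 ∂μ ≤ ∫ s in Set.Ioc r₀ r, s ^ (b - 1) :=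
    setIntegral_mono_on hg2int (hrpow_int.mono_set Set.Ioc_subset_Icc_self)
      measurableSet_Ioc hgsq_le
  -- compute the rpow integral
  have hval : ∫ s in Set.Ioc r₀ r, s ^ (b - 1) = (r ^ b - r₀ ^ b) / b := by
    rw [← intervalIntegral.integral_of_le hr,
      integral_rpow (Or.inr ⟨by intro h; apply hbne; linarith [sub_eq_iff_eq_add.1 h],
        Set.notMem_uIcc_of_lt hr₀ hr0⟩)]
    rw [show b - 1 + 1 = b by ring]
  have hxb : 0 < r ^ b := Real.rpow_pos_of_pos hr0 b
  have hyb : 0 < r₀ ^ b := Real.rpow_pos_of_pos hr₀ b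
  have habs : 0 < |b| := abs_pos.2 hbne
  have hval_le : (r ^ b - r₀ ^ b) / b ≤ (r ^ b + r₀ ^ b) / |b| := by
    have h1 : (r ^ b - r₀ ^ b) / b ≤ |(r ^ b - r₀ ^ b) / b| := le_abs_self _
    rw [abs_div] at h1
    refine h1.trans ?_
    gcongr
    rw [abs_sub_le_iff]
    constructor <;> nlinarith
  have hsqb : Real.sqrt |b| ≠ 0 := ne_of_gt (Real.sqrt_pos.2 habs)
  have hrβ2 : Real.sqrt (r ^ b) = r ^ β := by
    rw [Real.sqrt_eq_rpow, ← Real.rpow_mul hr0.le]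
    congr 1
    rw [hbdef, hβdef]; ring
  have hr₀β2 : Real.sqrt (r₀ ^ b) = r₀ ^ β := by
    rw [Real.sqrt_eq_rpow, ← Real.rpow_mul hr₀.le]
    congr 1
    rw [hbdef, hβdef]; ring
  have hsg : Real.sqrt (∫ s, g s ^ 2 ∂μ) ≤ (r ^ β + r₀ ^ β) / Real.sqrt |b| := by
    have h1 : ∫ s, g s ^ 2 ∂μ ≤ (r ^ b + r₀ ^ b) / |b| :=
      hSg_le1.trans (hval ▸ hval_le)
    refine (Real.sqrt_le_sqrt h1).trans ?_
    rw [Real.sqrt_div (by positivity) _]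
    gcongr
    refine (sqrt_add_le_aux hxb.le hyb.le).trans_eq ?_
    rw [hrβ2, hr₀β2]
  -- the key estimate
  have key : ‖∫ s in r₀..r, ((s ^ (k + 1) : ℝ) : ℂ) * w s‖ ≤
      Real.sqrt M * ((r ^ β + r₀ ^ β) / Real.sqrt |b|) := by
    rw [intervalIntegral.integral_of_le hr]
    refine (MeasureTheory.norm_integral_le_integral_norm _).trans ?_
    have hcongr : ∫ s in Set.Ioc r₀ r, ‖((s ^ (k + 1) : ℝ) : ℂ) * w s‖ =
        ∫ s, f s * g s ∂μ := by
      refine integral_congr_ae ?_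
      filter_upwards [haeA] with s hs
      have hs0 : 0 < s := hr₀.trans hs.1
      rw [norm_mul, Complex.norm_real, Real.norm_of_nonneg (pow_nonneg hs0.le _), hfg s hs]
    rw [hcongr]
    refine holder.trans ?_
    have h0 : 0 ≤ ∫ s, g s ^ 2 ∂μ := integral_nonneg fun s => sq_nonneg _
    exact mul_le_mul (Real.sqrt_le_sqrt hSfM) hsg (Real.sqrt_nonneg _) (Real.sqrt_nonneg _)
  -- assemble
  have hz1 : r ^ (-(k : ℤ) - 1) = (r ^ (k + 1) : ℝ)⁻¹ := by
    rw [← zpow_natCast r (k + 1), ← zpow_neg]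
    congr 1
    push_cast
    ring
  rw [norm_mul, Complex.norm_real, hz1,
    Real.norm_of_nonneg (inv_nonneg.2 (pow_nonneg hr0.le (k + 1)))]
  have h := mul_le_mul_of_nonneg_left key (inv_nonneg.2 (pow_nonneg hr0.le (k + 1)))
  refine h.trans (le_of_eq ?_)
  have hrβ : r ^ β = r ^ (k + 1) * r ^ (-N) := by
    rw [show β = ((k + 1 : ℕ) : ℝ) + (-N) by push_cast; rw [hβdef]; ring,
      Real.rpow_add hr0, Real.rpow_natCast]
  have hr₀β : r₀ ^ β = r₀ ^ (k + 1) * r₀ ^ (-N) := by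
    rw [show β = ((k + 1 : ℕ) : ℝ) + (-N) by push_cast; rw [hβdef]; ring,
      Real.rpow_add hr₀, Real.rpow_natCast]
  have hrk : (r : ℝ) ^ (k + 1) ≠ 0 := ne_of_gt (pow_pos hr0 _)
  rw [hrβ, hr₀β, div_pow]
  field_simp
end

section
/- Let r₀ > 0, let k ≥ 1 be an integer, set N = k + 1, and let w : (r₀,∞) → ℂ be measurable with ‖w‖²_{L_{2,N}(r₀,∞)} = ∫_{r₀}^∞ |w(s)|²·(1+s²)^N·s ds < ∞. Then for every r ≥ r₀, | r^{-k-1}·∫_{r₀}^r s^{k+1}·w(s) ds | ≤ (√(ln r − ln r₀) / r^{k+1})·‖w‖_{L_{2,N}(r₀,∞)}. -/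
open Real MeasureTheory intervalIntegral

/-- logarithmic borderline case `N = k + 1` of the pointwise
bound for the first term `r^{-k-1}·∫_{r₀}^r s^{k+1}·w(s) ds`. -/
theorem first_term_pointwise_bound_borderline (r₀ : ℝ) (hr₀ : 0 < r₀)
    (k : ℕ) (hk : 1 ≤ k) (N : ℝ) (hN : N = (k : ℝ) + 1)
    (w : ℝ → ℂ) (hw : Measurable w)
    (hwL : IntegrableOn (fun s : ℝ => ‖w s‖ ^ 2 * (1 + s ^ 2) ^ N * s) (Set.Ioi r₀)) :
    ∀ r : ℝ, r₀ ≤ r →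
      ‖((r ^ (-(k : ℤ) - 1) : ℝ) : ℂ) *
            ∫ s in r₀..r, ((s ^ (k + 1) : ℝ) : ℂ) * w s‖ ≤
        (Real.sqrt (Real.log r - Real.log r₀) / r ^ (k + 1)) *
          Real.sqrt (∫ s in Set.Ioi r₀, ‖w s‖ ^ 2 * (1 + s ^ 2) ^ N * s) := by
  intro r hr
  have hrpos : 0 < r := lt_of_lt_of_le hr₀ hr
  set A : ℝ := ∫ s in Set.Ioi r₀, ‖w s‖ ^ 2 * (1 + s ^ 2) ^ N * s with hA
  set μ := volume.restrict (Set.Ioc r₀ r) with hμ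
  -- the two Hölder factors
  set f : ℝ → ℝ := fun s => (Real.sqrt s)⁻¹ with hf
  set g : ℝ → ℝ := fun s => s ^ (k + 1) * Real.sqrt s * ‖w s‖ with hg
  -- a.e. membership in Ioc
  have hmem : ∀ᵐ s ∂μ, s ∈ Set.Ioc r₀ r := ae_restrict_mem measurableSet_Ioc
  -- pointwise bound on the square of g
  have hbound : ∀ s ∈ Set.Ioc r₀ r,
      g s ^ 2 ≤ ‖w s‖ ^ 2 * (1 + s ^ 2) ^ N * s := by
    intro s hs
    have hs0 : 0 < s := lt_trans hr₀ hs.1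
    have hsq : Real.sqrt s ^ 2 = s := Real.sq_sqrt hs0.le
    have h1 : g s ^ 2 = ‖w s‖ ^ 2 * (s ^ 2) ^ (k + 1) * s := by
      simp only [hg]; rw [mul_pow, mul_pow, hsq, ← pow_mul, ← pow_mul]; ring
    rw [h1]
    have h2 : (s ^ 2) ^ (k + 1) ≤ (1 + s ^ 2) ^ (k + 1) := by
      apply pow_le_pow_left₀ (sq_nonneg s)
      linarith [sq_nonneg s]
    have h3 : ((1 + s ^ 2 : ℝ)) ^ (N : ℝ) = (1 + s ^ 2) ^ (k + 1) := by
      rw [hN]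
      rw [show ((k : ℝ) + 1) = ((k + 1 : ℕ) : ℝ) by push_cast; ring,
        Real.rpow_natCast]
    rw [h3]
    have := mul_le_mul_of_nonneg_left h2 (sq_nonneg ‖w s‖)
    exact mul_le_mul_of_nonneg_right this hs0.le
  -- integrability of the weighted square on Ioc
  have hwLIoc : IntegrableOn (fun s : ℝ => ‖w s‖ ^ 2 * (1 + s ^ 2) ^ N * s)
      (Set.Ioc r₀ r) := hwL.mono_set Set.Ioc_subset_Ioi_self
  -- measurability of g
  have hgm : Measurable g := by
    apply ((measurable_id.pow_const (k+1)).mul Real.continuous_sqrt.measurable).mul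
      hw.norm
  have hg2int : Integrable (fun s => g s ^ 2) μ := by
    refine Integrable.mono' hwLIoc (hgm.pow_const 2).aestronglyMeasurable ?_
    filter_upwards [hmem] with s hs
    rw [Real.norm_of_nonneg (sq_nonneg _)]
    exact hbound s hs
  have hf2int : Integrable (fun s => f s ^ 2) μ := by
    refine Integrable.mono' (integrable_const r₀⁻¹) ?_ ?_
    · exact ((Real.continuous_sqrt.measurable.inv).pow_const 2).aestronglyMeasurable
    · filter_upwards [hmem] with s hs
      have hs0 : 0 < s := lt_trans hr₀ hs.1
      have : f s ^ 2 = s⁻¹ := by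
        simp only [hf, inv_pow, Real.sq_sqrt hs0.le]
      rw [Real.norm_of_nonneg (by positivity : (0:ℝ) ≤ f s ^ 2), this]
      exact inv_anti₀ hr₀ hs.1.le
  have hfmem : MemLp f (ENNReal.ofReal 2) μ := by
    rw [show ENNReal.ofReal 2 = 2 by norm_num]
    exact (memLp_two_iff_integrable_sq
      Real.continuous_sqrt.measurable.inv.aestronglyMeasurable).2 hf2int
  have hgmem : MemLp g (ENNReal.ofReal 2) μ := by
    rw [show ENNReal.ofReal 2 = 2 by norm_num]
    exact (memLp_two_iff_integrable_sq hgm.aestronglyMeasurable).2 hg2int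
  have hfnn : 0 ≤ᵐ[μ] f := Filter.Eventually.of_forall fun s => by positivity
  have hgnn : 0 ≤ᵐ[μ] g := by
    filter_upwards [hmem] with s hs
    have hs0 : 0 < s := lt_trans hr₀ hs.1
    simp only [hg]; positivity
  have holder := integral_mul_le_Lp_mul_Lq_of_nonneg (⟨by norm_num, by norm_num, by norm_num⟩ : (2:ℝ).HolderConjugate 2)
    hfnn hgnn hfmem hgmem
  -- identify the integrals
  have hAnn : 0 ≤ A := by
    apply setIntegral_nonneg measurableSet_Ioi
    intro s hs
    have hs0 : 0 < s := lt_trans hr₀ hs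
    positivity
  -- ∫ f^2 dμ = log r - log r₀
  have hfint : ∫ s, f s ^ (2:ℝ) ∂μ = Real.log r - Real.log r₀ := by
    have h1 : ∫ s, f s ^ (2:ℝ) ∂μ = ∫ s in Set.Ioc r₀ r, s⁻¹ := by
      apply setIntegral_congr_fun measurableSet_Ioc
      intro s hs
      have hs0 : 0 < s := lt_trans hr₀ hs.1
      simp only [show (2:ℝ) = ((2:ℕ):ℝ) by norm_num, Real.rpow_natCast]
      simp only [hf, inv_pow, Real.sq_sqrt hs0.le]
    rw [h1, ← intervalIntegral.integral_of_le hr,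
      _root_.integral_inv (by
        intro h
        rcases Set.mem_uIcc.1 h with ⟨h1, _⟩ | ⟨h1, _⟩ <;> linarith),
      Real.log_div (ne_of_gt hrpos) (ne_of_gt hr₀)]
  -- ∫ g^2 dμ ≤ A
  have hgint : ∫ s, g s ^ (2:ℝ) ∂μ ≤ A := by
    have h1 : ∫ s, g s ^ (2:ℝ) ∂μ = ∫ s, g s ^ 2 ∂μ := by
      apply MeasureTheory.integral_congr_ae
      filter_upwards [hgnn] with s hs
      simp only [show (2:ℝ) = ((2:ℕ):ℝ) by norm_num, Real.rpow_natCast]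
    rw [h1]
    calc ∫ s, g s ^ 2 ∂μ ≤ ∫ s in Set.Ioc r₀ r, ‖w s‖ ^ 2 * (1 + s ^ 2) ^ N * s := by
          apply integral_mono_ae hg2int hwLIoc
          filter_upwards [hmem] with s hs using hbound s hs
      _ ≤ A := by
          apply setIntegral_mono_set hwL ?_ (HasSubset.Subset.eventuallyLE Set.Ioc_subset_Ioi_self)
          filter_upwards [ae_restrict_mem measurableSet_Ioi] with s hs
          have hs0 : 0 < s := lt_trans hr₀ hs
          positivity
  -- step 1 : bound the norm of the interval integral
  have step1 : ‖∫ s in r₀..r, ((s ^ (k + 1) : ℝ) : ℂ) * w s‖ ≤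
      ∫ s, f s * g s ∂μ := by
    calc ‖∫ s in r₀..r, ((s ^ (k + 1) : ℝ) : ℂ) * w s‖
        ≤ ∫ s in r₀..r, ‖((s ^ (k + 1) : ℝ) : ℂ) * w s‖ :=
          intervalIntegral.norm_integral_le_integral_norm hr
      _ = ∫ s, f s * g s ∂μ := by
          rw [intervalIntegral.integral_of_le hr]
          apply setIntegral_congr_fun measurableSet_Ioc
          intro s hs
          have hs0 : 0 < s := lt_trans hr₀ hs.1
          have hsqrt : Real.sqrt s ≠ 0 := by positivity
          simp only [hf, hg, norm_mul, Complex.norm_real, Real.norm_eq_abs,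
            abs_of_pos (pow_pos hs0 (k+1))]
          field_simp
  -- combine
  have step2 : ∫ s, f s * g s ∂μ ≤
      Real.sqrt (Real.log r - Real.log r₀) * Real.sqrt A := by
    refine le_trans holder ?_
    rw [hfint]
    have h2 : (∫ s, g s ^ (2:ℝ) ∂μ) ^ ((1:ℝ)/2) ≤ A ^ ((1:ℝ)/2) := by
      apply Real.rpow_le_rpow ?_ hgint (by norm_num)
      apply MeasureTheory.integral_nonneg_of_ae
      filter_upwards [hgnn] with s hs
      exact Real.rpow_nonneg hs 2
    calc (Real.log r - Real.log r₀) ^ ((1:ℝ)/2) * (∫ s, g s ^ (2:ℝ) ∂μ) ^ ((1:ℝ)/2)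
        ≤ (Real.log r - Real.log r₀) ^ ((1:ℝ)/2) * A ^ ((1:ℝ)/2) := by
          apply mul_le_mul_of_nonneg_left h2
          exact Real.rpow_nonneg (sub_nonneg.2 (Real.log_le_log hr₀ hr)) _
      _ = Real.sqrt (Real.log r - Real.log r₀) * Real.sqrt A := by
          rw [Real.sqrt_eq_rpow, Real.sqrt_eq_rpow]
  -- the prefactor
  have hpre : ‖((r ^ (-(k : ℤ) - 1) : ℝ) : ℂ)‖ = (r ^ (k + 1))⁻¹ := by
    rw [Complex.norm_real, Real.norm_eq_abs,
      abs_of_pos (zpow_pos hrpos _),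
      show -(k : ℤ) - 1 = -((k : ℤ) + 1) by ring, zpow_neg,
      show ((k : ℤ) + 1) = ((k + 1 : ℕ) : ℤ) by push_cast; ring, zpow_natCast]
  rw [norm_mul, hpre]
  have := mul_le_mul_of_nonneg_left (le_trans step1 step2)
    (by positivity : (0:ℝ) ≤ (r ^ (k + 1))⁻¹)
  calc (r ^ (k + 1))⁻¹ * ‖∫ s in r₀..r, ((s ^ (k + 1) : ℝ) : ℂ) * w s‖
      ≤ (r ^ (k + 1))⁻¹ * (Real.sqrt (Real.log r - Real.log r₀) * Real.sqrt A) := this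
    _ = (Real.sqrt (Real.log r - Real.log r₀) / r ^ (k + 1)) * Real.sqrt A := by
        ring
end

section
/- Let r₀ > 0, let N > 1 be real, let k ≥ 0 be an integer, and let w : (r₀,∞) → ℂ be measurable with ‖w‖²_{L_{2,N}(r₀,∞)} = ∫_{r₀}^∞ |w(s)|²·(1+s²)^N·s ds < ∞. Then for every r ≥ r₀ the function s ↦ s^{-k+1}·w(s) is integrable on (r,∞) and | r^{k-1}·∫_r^∞ s^{-k+1}·w(s) ds | ≤ (1/(r^N·√(2k + 2N − 2)))·‖w‖_{L_{2,N}(r₀,∞)}. -/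
open Real MeasureTheory

/-- pointwise bound for the tail term
`r^{k-1}·∫_r^∞ s^{-k+1}·w(s) ds` of the Fourier-mode solution in terms of the
weighted norm `‖w‖_{L_{2,N}(r₀,∞)}`, for `N > 1`. -/
theorem tail_term_pointwise_bound (r₀ N : ℝ) (hr₀ : 0 < r₀) (hN : 1 < N)
    (k : ℕ) (w : ℝ → ℂ) (hw : Measurable w)
    (hwL : IntegrableOn (fun s : ℝ => ‖w s‖ ^ 2 * (1 + s ^ 2) ^ N * s) (Set.Ioi r₀)) :
    ∀ r : ℝ, r₀ ≤ r →
      IntegrableOn (fun s : ℝ => ((s ^ (-(k : ℤ) + 1) : ℝ) : ℂ) * w s) (Set.Ioi r) ∧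
      ‖((r ^ ((k : ℤ) - 1) : ℝ) : ℂ) *
            ∫ s in Set.Ioi r, ((s ^ (-(k : ℤ) + 1) : ℝ) : ℂ) * w s‖ ≤
        (1 / (r ^ N * Real.sqrt (2 * (k : ℝ) + 2 * N - 2))) *
          Real.sqrt (∫ s in Set.Ioi r₀, ‖w s‖ ^ 2 * (1 + s ^ 2) ^ N * s) := by
  intro r hr
  have hr0 : 0 < r := lt_of_lt_of_le hr₀ hr
  have hsub : Set.Ioi r ⊆ Set.Ioi r₀ := Set.Ioi_subset_Ioi hr
  have hk0 : (0:ℝ) ≤ (k : ℝ) := Nat.cast_nonneg k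
  set a : ℝ := 1 - (k : ℝ) with ha
  set D : ℝ := 2 * (k : ℝ) + 2 * N - 2 with hDdef
  have hD : 0 < D := by rw [hDdef]; linarith
  set F : ℝ → ℝ := fun s => s ^ (a - 1/2) * (1 + s ^ 2) ^ (-(N/2)) with hF
  set G : ℝ → ℝ := fun s => ‖w s‖ * ((1 + s ^ 2) ^ (N/2) * s ^ ((1:ℝ)/2)) with hG
  have hFmeas : Measurable F :=
    (measurable_id.pow_const _).mul ((measurable_const.add (measurable_id.pow_const 2)).pow_const _)
  have hGmeas : Measurable G :=
    hw.norm.mul (((measurable_const.add (measurable_id.pow_const 2)).pow_const _).mul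
      (measurable_id.pow_const _))
  -- pointwise identities on Ioi r
  have hFG_eq : ∀ s ∈ Set.Ioi r, F s * G s = s ^ a * ‖w s‖ := by
    intro s hs
    have hs0 : 0 < s := hr0.trans hs
    have h1 : (0:ℝ) < 1 + s ^ 2 := by positivity
    have e1 : (1 + s ^ 2) ^ (-(N/2)) * (1 + s ^ 2) ^ (N/2) = 1 := by
      rw [← Real.rpow_add h1]; norm_num
    have e2 : s ^ (a - 1/2) * s ^ ((1:ℝ)/2) = s ^ a := by
      rw [← Real.rpow_add hs0]; congr 1; ring
    have : F s * G s =
        (s ^ (a - 1/2) * s ^ ((1:ℝ)/2)) * ((1 + s ^ 2) ^ (-(N/2)) * (1 + s ^ 2) ^ (N/2)) *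
          ‖w s‖ := by
      rw [hF, hG]; ring
    rw [this, e1, e2]; ring
  have hnorm_eq : ∀ s ∈ Set.Ioi r, ‖((s ^ (-(k : ℤ) + 1) : ℝ) : ℂ) * w s‖ = F s * G s := by
    intro s hs
    have hs0 : 0 < s := hr0.trans hs
    have hz : (s : ℝ) ^ (-(k:ℤ) + 1) = s ^ a := by
      rw [← Real.rpow_intCast s (-(k:ℤ) + 1)]; congr 1; rw [ha]; push_cast; ring
    rw [hFG_eq s hs, norm_mul, Complex.norm_real, Real.norm_eq_abs,
      abs_of_pos (zpow_pos hs0 _), hz]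
  -- integrable majorant for F^2
  have hexp : 2*a - 1 - 2*N < -1 := by rw [ha]; linarith
  have hI : IntegrableOn (fun s : ℝ => s ^ (2*a - 1 - 2*N)) (Set.Ioi r) :=
    integrableOn_Ioi_rpow_of_lt hexp hr0
  have hptF : ∀ s ∈ Set.Ioi r, F s ^ 2 ≤ s ^ (2*a - 1 - 2*N) := by
    intro s hs
    have hs0 : 0 < s := hr0.trans hs
    have h1 : (0:ℝ) < 1 + s ^ 2 := by positivity
    have p1 : s ^ (a - 1/2) * s ^ (a - 1/2) = s ^ (2*a - 1) := by
      rw [← Real.rpow_add hs0]; congr 1; ring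
    have p2 : (1 + s ^ 2) ^ (-(N/2)) * (1 + s ^ 2) ^ (-(N/2)) = (1 + s ^ 2) ^ (-N) := by
      rw [← Real.rpow_add h1]; congr 1; ring
    have hFsq : F s ^ 2 = s ^ (2*a - 1) * (1 + s ^ 2) ^ (-N) := by
      have : F s ^ 2 = (s ^ (a - 1/2) * s ^ (a - 1/2)) *
          ((1 + s ^ 2) ^ (-(N/2)) * (1 + s ^ 2) ^ (-(N/2))) := by rw [hF]; ring
      rw [this, p1, p2]
    have q1 : s ^ (-(2*N)) = (s ^ 2 : ℝ) ^ (-N) := by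
      rw [← Real.rpow_natCast s 2, ← Real.rpow_mul hs0.le]; norm_num
    have q : (1 + s ^ 2) ^ (-N) ≤ s ^ (-(2*N)) := by
      rw [q1]
      exact Real.rpow_le_rpow_of_nonpos (by positivity) (by nlinarith) (by linarith)
    calc F s ^ 2 = s ^ (2*a - 1) * (1 + s ^ 2) ^ (-N) := hFsq
      _ ≤ s ^ (2*a - 1) * s ^ (-(2*N)) :=
          mul_le_mul_of_nonneg_left q (Real.rpow_nonneg hs0.le _)
      _ = s ^ (2*a - 1 - 2*N) := by rw [← Real.rpow_add hs0]; congr 1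
  have hF2 : IntegrableOn (fun s : ℝ => F s ^ 2) (Set.Ioi r) := by
    refine hI.mono' ((hFmeas.pow_const 2).aestronglyMeasurable) ?_
    filter_upwards [ae_restrict_mem measurableSet_Ioi] with s hs
    rw [Real.norm_eq_abs, abs_of_nonneg (sq_nonneg _)]
    exact hptF s hs
  -- G^2 equals the weighted integrand on Ioi r
  have hGsq_eq : ∀ s ∈ Set.Ioi r, ‖w s‖ ^ 2 * (1 + s ^ 2) ^ N * s = G s ^ 2 := by
    intro s hs
    have hs0 : 0 < s := hr0.trans hs
    have h1 : (0:ℝ) < 1 + s ^ 2 := by positivity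
    have p1 : (1 + s ^ 2) ^ (N/2) * (1 + s ^ 2) ^ (N/2) = (1 + s ^ 2) ^ N := by
      rw [← Real.rpow_add h1]; congr 1; ring
    have p2 : s ^ ((1:ℝ)/2) * s ^ ((1:ℝ)/2) = s := by
      rw [← Real.rpow_add hs0]; norm_num
    have : G s ^ 2 = ‖w s‖ ^ 2 * ((1 + s ^ 2) ^ (N/2) * (1 + s ^ 2) ^ (N/2)) *
        (s ^ ((1:ℝ)/2) * s ^ ((1:ℝ)/2)) := by rw [hG]; ring
    rw [this, p1, p2]
  have hG2 : IntegrableOn (fun s : ℝ => G s ^ 2) (Set.Ioi r) :=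
    (hwL.mono_set hsub).congr_fun hGsq_eq measurableSet_Ioi
  -- Memℒp facts
  have hFLp : MemLp F 2 (volume.restrict (Set.Ioi r)) :=
    (memLp_two_iff_integrable_sq hFmeas.aestronglyMeasurable).mpr hF2
  have hGLp : MemLp G 2 (volume.restrict (Set.Ioi r)) :=
    (memLp_two_iff_integrable_sq hGmeas.aestronglyMeasurable).mpr hG2
  have hFGint : Integrable (fun s => F s * G s) (volume.restrict (Set.Ioi r)) := by
    have h := hGLp.smul (r := 1) hFLp (hpqr := ⟨by norm_num [ENNReal.inv_two_add_inv_two]⟩)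
    rw [memLp_one_iff_integrable] at h
    simpa [smul_eq_mul, mul_comm, Pi.mul_def] using h
  -- Part 1 : integrability
  have hmeasC : Measurable fun s : ℝ => ((s ^ (-(k : ℤ) + 1) : ℝ) : ℂ) * w s :=
    (Complex.measurable_ofReal.comp (measurable_id.pow_const _)).mul hw
  have hint : IntegrableOn (fun s : ℝ => ((s ^ (-(k : ℤ) + 1) : ℝ) : ℂ) * w s) (Set.Ioi r) := by
    refine hFGint.mono' hmeasC.aestronglyMeasurable ?_
    filter_upwards [ae_restrict_mem measurableSet_Ioi] with s hs
    rw [hnorm_eq s hs]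
  refine ⟨hint, ?_⟩
  -- Part 2 : the bound
  set I₀ : ℝ := ∫ s in Set.Ioi r₀, ‖w s‖ ^ 2 * (1 + s ^ 2) ^ N * s with hI₀
  have hI₀nonneg : 0 ≤ I₀ := by
    rw [hI₀]
    refine setIntegral_nonneg measurableSet_Ioi fun s hs => ?_
    have hs0 : 0 < s := hr₀.trans hs
    have h1 : (0:ℝ) < 1 + s ^ 2 := by positivity
    exact mul_nonneg (mul_nonneg (sq_nonneg _) (Real.rpow_nonneg h1.le _)) hs0.le
  -- Hölder
  have hFnn : 0 ≤ᵐ[volume.restrict (Set.Ioi r)] F := by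
    filter_upwards [ae_restrict_mem measurableSet_Ioi] with s hs
    have hs0 : 0 < s := hr0.trans hs
    have h1 : (0:ℝ) < 1 + s ^ 2 := by positivity
    exact mul_nonneg (Real.rpow_nonneg hs0.le _) (Real.rpow_nonneg h1.le _)
  have hGnn : 0 ≤ᵐ[volume.restrict (Set.Ioi r)] G := by
    filter_upwards [ae_restrict_mem measurableSet_Ioi] with s hs
    have hs0 : 0 < s := hr0.trans hs
    have h1 : (0:ℝ) < 1 + s ^ 2 := by positivity
    exact mul_nonneg (norm_nonneg _)
      (mul_nonneg (Real.rpow_nonneg h1.le _) (Real.rpow_nonneg hs0.le _))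
  have hofReal : ENNReal.ofReal (2:ℝ) = 2 := by norm_num
  have holder := integral_mul_le_Lp_mul_Lq_of_nonneg (Real.HolderTriple.mk (by norm_num) two_pos
    two_pos) hFnn hGnn (hofReal ▸ hFLp) (hofReal ▸ hGLp)
  have hrpow2 : ∀ f : ℝ → ℝ, (∫ s in Set.Ioi r, f s ^ (2:ℝ)) = ∫ s in Set.Ioi r, f s ^ 2 := by
    intro f
    refine integral_congr_ae (Filter.Eventually.of_forall fun s => ?_)
    show f s ^ (2:ℝ) = f s ^ 2
    rw [show (2:ℝ) = ((2:ℕ):ℝ) by norm_num, Real.rpow_natCast]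
  rw [hrpow2 F, hrpow2 G, ← Real.sqrt_eq_rpow, ← Real.sqrt_eq_rpow] at holder
  -- bound on sqrt ∫ F^2
  have hFint_le : (∫ s in Set.Ioi r, F s ^ 2) ≤ r ^ (-D) / D := by
    have h1 : (∫ s in Set.Ioi r, F s ^ 2) ≤ ∫ s in Set.Ioi r, s ^ (2*a - 1 - 2*N) :=
      setIntegral_mono_on hF2 hI measurableSet_Ioi hptF
    have h2 : (∫ s in Set.Ioi r, s ^ (2*a - 1 - 2*N)) = r ^ (-D) / D := by
      rw [integral_Ioi_rpow_of_lt hexp hr0,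
        show 2*a - 1 - 2*N + 1 = -D by rw [ha, hDdef]; ring]
      rw [neg_div_neg_eq]
    linarith
  have hsqrtF : Real.sqrt (∫ s in Set.Ioi r, F s ^ 2) ≤ r ^ (-(D/2)) / Real.sqrt D := by
    refine le_trans (Real.sqrt_le_sqrt hFint_le) ?_
    rw [Real.sqrt_div (Real.rpow_nonneg hr0.le _)]
    gcongr
    rw [Real.sqrt_eq_rpow, ← Real.rpow_mul hr0.le]
    exact le_of_eq (by congr 1; ring)
  -- bound on sqrt ∫ G^2
  have hGint_le : (∫ s in Set.Ioi r, G s ^ 2) ≤ I₀ := by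
    have h1 : (∫ s in Set.Ioi r, G s ^ 2) =
        ∫ s in Set.Ioi r, ‖w s‖ ^ 2 * (1 + s ^ 2) ^ N * s :=
      setIntegral_congr_fun measurableSet_Ioi fun s hs => (hGsq_eq s hs).symm
    rw [h1, hI₀]
    refine setIntegral_mono_set hwL ?_ (HasSubset.Subset.eventuallyLE hsub)
    filter_upwards [ae_restrict_mem measurableSet_Ioi] with s hs
    have hs0 : 0 < s := hr₀.trans hs
    have h1 : (0:ℝ) < 1 + s ^ 2 := by positivity
    exact mul_nonneg (mul_nonneg (sq_nonneg _) (Real.rpow_nonneg h1.le _)) hs0.le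
  have hsqrtG : Real.sqrt (∫ s in Set.Ioi r, G s ^ 2) ≤ Real.sqrt I₀ :=
    Real.sqrt_le_sqrt hGint_le
  -- assemble
  set B : ℝ := r ^ ((k:ℤ) - 1) with hB
  have hBpos : 0 < B := zpow_pos hr0 _
  have hBrpow : B = r ^ ((k:ℝ) - 1) := by
    rw [hB, ← Real.rpow_intCast r ((k:ℤ) - 1)]; congr 1; push_cast; ring
  have hnormint_eq : (∫ s in Set.Ioi r, ‖((s ^ (-(k : ℤ) + 1) : ℝ) : ℂ) * w s‖) =
      ∫ s in Set.Ioi r, F s * G s :=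
    setIntegral_congr_fun measurableSet_Ioi fun s hs => hnorm_eq s hs
  have key : ‖((B : ℝ) : ℂ) * ∫ s in Set.Ioi r, ((s ^ (-(k : ℤ) + 1) : ℝ) : ℂ) * w s‖ ≤
      B * ((r ^ (-(D/2)) / Real.sqrt D) * Real.sqrt I₀) := by
    rw [norm_mul, Complex.norm_real, Real.norm_eq_abs, abs_of_pos hBpos]
    refine le_trans (mul_le_mul_of_nonneg_left (norm_integral_le_integral_norm _) hBpos.le) ?_
    rw [hnormint_eq]
    refine mul_le_mul_of_nonneg_left (le_trans holder ?_) hBpos.le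
    exact mul_le_mul hsqrtF hsqrtG (Real.sqrt_nonneg _)
      (div_nonneg (Real.rpow_nonneg hr0.le _) (Real.sqrt_nonneg _))
  refine le_trans key (le_of_eq ?_)
  have hmul : B * r ^ (-(D/2)) = (r ^ N)⁻¹ := by
    rw [hBrpow, ← Real.rpow_add hr0, show (k:ℝ) - 1 + -(D/2) = -N by rw [hDdef]; ring,
      Real.rpow_neg hr0.le]
  rw [show B * (r ^ (-(D/2)) / Real.sqrt D * Real.sqrt I₀) =
      B * r ^ (-(D/2)) * Real.sqrt I₀ / Real.sqrt D by ring, hmul, one_div, mul_inv]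
  ring
end

section
/- Let r₀ > 0, let N > 1 be real, let k ≥ 1 be an integer with k + 1 ≠ N, and let w : (r₀,∞) → ℂ be measurable with ‖w‖²_{L_{2,N}(r₀,∞)} = ∫_{r₀}^∞ |w(s)|²·(1+s²)^N·s ds < ∞. Then ∫_{r₀}^∞ | r^{-k-1}·∫_{r₀}^r s^{k+1}·w(s) ds |²·r dr ≤ (2/|2k + 2 − 2N|)·‖w‖²_{L_{2,N}(r₀,∞)}·( r₀^{2-2N}/(2N−2) + r₀^{2-2N}/(2k) ). -/
open Real MeasureTheory intervalIntegral

lemma first_term_ptwise (r₀ N : ℝ) (hr₀ : 0 < r₀) (hN : 1 < N)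
    (k : ℕ) (hkN : (k : ℝ) + 1 ≠ N)
    (w : ℝ → ℂ) (hw : Measurable w)
    (hwL : IntegrableOn (fun s : ℝ => ‖w s‖ ^ 2 * (1 + s ^ 2) ^ N * s) (Set.Ioi r₀))
    {r : ℝ} (hr : r₀ < r) :
    ‖((r ^ (-(k : ℤ) - 1) : ℝ) : ℂ) * ∫ s in r₀..r, ((s ^ (k + 1) : ℝ) : ℂ) * w s‖ ^ 2 * r ≤
      ((∫ s in Set.Ioi r₀, ‖w s‖ ^ 2 * (1 + s ^ 2) ^ N * s) / |2 * (k : ℝ) + 2 - 2 * N|) *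
        (r ^ (1 - 2 * N) + r₀ ^ (2 * (k : ℝ) + 2 - 2 * N) * r ^ (-2 * (k : ℝ) - 1)) := by
  have hr0 : 0 < r := hr₀.trans hr
  set a : ℝ := 2 * (k : ℝ) + 2 - 2 * N with ha_def
  have ha : a ≠ 0 := fun h => hkN (by rw [ha_def] at h; linarith)
  have habs : 0 < |a| := abs_pos.2 ha
  set W : ℝ := ∫ s in Set.Ioi r₀, ‖w s‖ ^ 2 * (1 + s ^ 2) ^ N * s with hW_def
  have hW : 0 ≤ W := setIntegral_nonneg measurableSet_Ioi fun s hs =>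
    mul_nonneg (mul_nonneg (sq_nonneg _) (Real.rpow_nonneg (by positivity) _))
      (le_of_lt (hr₀.trans hs))
  set f : ℝ → ℝ := fun s => s ^ ((k : ℝ) + 1/2) * (1 + s ^ 2) ^ (-(N/2)) with hf_def
  set g : ℝ → ℝ := fun s => (1 + s ^ 2) ^ (N/2) * s ^ (1/2 : ℝ) * ‖w s‖ with hg_def
  have hbase : ∀ x ∈ Set.Ioc r₀ r, (x : ℝ) ≠ 0 ∨ (0:ℝ) ≤ (0:ℝ) := fun x hx =>
    Or.inl (ne_of_gt (hr₀.trans hx.1))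
  have hcont1 : ∀ c : ℝ, ContinuousOn (fun x : ℝ => x ^ c) (Set.Ioc r₀ r) := fun c =>
    continuousOn_id.rpow_const fun x hx => Or.inl (ne_of_gt (hr₀.trans hx.1))
  have hcont2 : ∀ c : ℝ, ContinuousOn (fun x : ℝ => (1 + x ^ 2) ^ c) (Set.Ioc r₀ r) := fun c =>
    (continuousOn_const.add (continuousOn_id.pow 2)).rpow_const fun x hx =>
      Or.inl (ne_of_gt (lt_of_lt_of_le one_pos (le_add_of_nonneg_right (sq_nonneg _))))
  have hf_meas : AEStronglyMeasurable f (volume.restrict (Set.Ioc r₀ r)) :=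
    (((hcont1 _).mul (hcont2 _))).aestronglyMeasurable measurableSet_Ioc
  have hg_meas : AEStronglyMeasurable g (volume.restrict (Set.Ioc r₀ r)) :=
    ((((hcont2 _).mul (hcont1 _))).aestronglyMeasurable measurableSet_Ioc).mul
      hw.norm.aestronglyMeasurable
  haveI : Fact (volume (Set.Ioc r₀ r) < ⊤) := ⟨measure_Ioc_lt_top⟩
  -- Memℒp bounds
  have hf_mem : MemLp f 2 (volume.restrict (Set.Ioc r₀ r)) := by
    apply MemLp.of_bound hf_meas (r ^ ((k : ℝ) + 1/2))
    filter_upwards [ae_restrict_mem measurableSet_Ioc] with s hs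
    have hs0 : 0 < s := hr₀.trans hs.1
    rw [Real.norm_eq_abs, abs_of_nonneg (by positivity)]
    calc f s ≤ s ^ ((k : ℝ) + 1/2) * 1 := by
          apply mul_le_mul_of_nonneg_left _ (Real.rpow_nonneg hs0.le _)
          exact Real.rpow_le_one_of_one_le_of_nonpos (by nlinarith) (by linarith)
      _ ≤ r ^ ((k : ℝ) + 1/2) := by
          rw [mul_one]; exact Real.rpow_le_rpow hs0.le hs.2 (by positivity)
  have hg_sq_eq : ∀ s ∈ Set.Ioc r₀ r, ‖w s‖ ^ 2 * (1 + s ^ 2) ^ N * s = g s ^ 2 := by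
    intro s hs
    have hs0 : 0 < s := hr₀.trans hs.1
    have h1 : (0:ℝ) ≤ 1 + s ^ 2 := by positivity
    have e1 : ((1 + s ^ 2) ^ (N/2)) ^ 2 = (1 + s ^ 2) ^ N := by
      rw [← Real.rpow_natCast ((1 + s^2) ^ (N/2)) 2, ← Real.rpow_mul h1]; norm_num
    have e2 : (s ^ (1/2 : ℝ)) ^ 2 = s := by
      rw [← Real.rpow_natCast (s ^ (1/2:ℝ)) 2, ← Real.rpow_mul hs0.le]; norm_num
    calc ‖w s‖ ^ 2 * (1 + s ^ 2) ^ N * s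
        = ((1+s^2) ^ (N/2)) ^ 2 * (s ^ (1/2:ℝ)) ^ 2 * ‖w s‖ ^ 2 := by rw [e1, e2]; ring
      _ = g s ^ 2 := by rw [hg_def]; ring
  have hg_sq_int : IntegrableOn (fun s => g s ^ 2) (Set.Ioc r₀ r) :=
    (hwL.mono_set Set.Ioc_subset_Ioi_self).congr_fun hg_sq_eq measurableSet_Ioc
  have hg_mem : MemLp g 2 (volume.restrict (Set.Ioc r₀ r)) :=
    (memLp_two_iff_integrable_sq hg_meas).mpr hg_sq_int
  -- Hölder
  set A : ℝ := ∫ s in Set.Ioc r₀ r, f s ^ 2 with hA_def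
  set B : ℝ := ∫ s in Set.Ioc r₀ r, g s ^ 2 with hB_def
  have hA0 : 0 ≤ A := setIntegral_nonneg measurableSet_Ioc fun s _ => sq_nonneg _
  have hB0 : 0 ≤ B := setIntegral_nonneg measurableSet_Ioc fun s _ => sq_nonneg _
  have hrpow2 : ∀ x : ℝ, x ^ (2:ℝ) = x ^ 2 := fun x => by
    rw [← Real.rpow_natCast x 2]; norm_num
  have holder : ∫ s in Set.Ioc r₀ r, f s * g s ≤ A ^ (1/2:ℝ) * B ^ (1/2:ℝ) := by
    have h2 : ENNReal.ofReal (2:ℝ) = 2 := by norm_num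
    have h := integral_mul_le_Lp_mul_Lq_of_nonneg (μ := volume.restrict (Set.Ioc r₀ r))
      (p := 2) (q := 2) (f := f) (g := g) Real.HolderConjugate.two_two
      ?_ ?_ (h2 ▸ hf_mem) (h2 ▸ hg_mem)
    · simp only [hrpow2] at h
      convert h using 3 <;> norm_num
    · filter_upwards [ae_restrict_mem measurableSet_Ioc] with s hs
      have hs0 : 0 < s := hr₀.trans hs.1
      positivity
    · filter_upwards [ae_restrict_mem measurableSet_Ioc] with s hs
      have hs0 : 0 < s := hr₀.trans hs.1
      positivity
  -- bound on the norm of the inner integral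
  have hIle : ‖∫ s in r₀..r, ((s ^ (k + 1) : ℝ) : ℂ) * w s‖ ≤ A ^ (1/2:ℝ) * B ^ (1/2:ℝ) := by
    calc ‖∫ s in r₀..r, ((s ^ (k + 1) : ℝ) : ℂ) * w s‖
        ≤ ∫ s in Set.uIoc r₀ r, ‖((s ^ (k + 1) : ℝ) : ℂ) * w s‖ :=
          intervalIntegral.norm_integral_le_integral_norm_uIoc
      _ = ∫ s in Set.Ioc r₀ r, ‖((s ^ (k + 1) : ℝ) : ℂ) * w s‖ := by
          rw [Set.uIoc_of_le hr.le]
      _ = ∫ s in Set.Ioc r₀ r, f s * g s := by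
          apply setIntegral_congr_fun measurableSet_Ioc
          intro s hs
          have hs0 : 0 < s := hr₀.trans hs.1
          have h1 : (0:ℝ) < 1 + s ^ 2 := by positivity
          show ‖((s ^ (k + 1) : ℝ) : ℂ) * w s‖ = f s * g s
          rw [norm_mul, Complex.norm_real, Real.norm_eq_abs, abs_of_pos (pow_pos hs0 _)]
          have e1 : f s * g s = (s ^ ((k:ℝ) + 1/2) * s ^ (1/2:ℝ)) *
              ((1 + s^2) ^ (-(N/2)) * (1 + s^2) ^ (N/2)) * ‖w s‖ := by
            simp only [hf_def, hg_def]; ring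
          rw [e1, ← Real.rpow_add hs0, ← Real.rpow_add h1,
            show ((k:ℝ) + 1/2 + 1/2) = ((k + 1 : ℕ) : ℝ) by push_cast; ring,
            Real.rpow_natCast, show (-(N/2) + N/2 : ℝ) = 0 by ring, Real.rpow_zero]
          ring
      _ ≤ A ^ (1/2:ℝ) * B ^ (1/2:ℝ) := holder
  have hIsq : ‖∫ s in r₀..r, ((s ^ (k + 1) : ℝ) : ℂ) * w s‖ ^ 2 ≤ A * B := by
    have hhalf : ∀ x : ℝ, 0 ≤ x → (x ^ (1/2:ℝ)) ^ 2 = x := fun x hx => by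
      rw [← Real.rpow_natCast (x ^ (1/2:ℝ)) 2, ← Real.rpow_mul hx]; norm_num
    calc ‖∫ s in r₀..r, ((s ^ (k + 1) : ℝ) : ℂ) * w s‖ ^ 2
        ≤ (A ^ (1/2:ℝ) * B ^ (1/2:ℝ)) ^ 2 := pow_le_pow_left₀ (norm_nonneg _) hIle 2
      _ = A * B := by rw [mul_pow, hhalf A hA0, hhalf B hB0]
  -- bound A
  have hA_le : A ≤ (r ^ a + r₀ ^ a) / |a| := by
    have hb_ne : (2*(k:ℝ) + 1 - 2*N) ≠ -1 := fun h => ha (by rw [ha_def]; linarith)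
    have hb_int : IntegrableOn (fun s : ℝ => s ^ (2*(k:ℝ) + 1 - 2*N)) (Set.Ioc r₀ r) := by
      have hc : ContinuousOn (fun s : ℝ => s ^ (2*(k:ℝ) + 1 - 2*N)) (Set.Icc r₀ r) :=
        continuousOn_id.rpow_const fun x hx => Or.inl (ne_of_gt (hr₀.trans_le hx.1))
      exact hc.integrableOn_Icc.mono_set Set.Ioc_subset_Icc_self
    have step1 : A ≤ ∫ s in Set.Ioc r₀ r, s ^ (2*(k:ℝ) + 1 - 2*N) := by
      apply integral_mono_of_nonneg (Filter.Eventually.of_forall fun s => sq_nonneg _) hb_int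
      filter_upwards [ae_restrict_mem measurableSet_Ioc] with s hs
      have hs0 : 0 < s := hr₀.trans hs.1
      have h1 : (0:ℝ) ≤ 1 + s ^ 2 := by positivity
      have e : f s ^ 2 = s ^ (2*(k:ℝ) + 1) * (1 + s^2) ^ (-N) := by
        simp only [hf_def]
        rw [mul_pow, ← Real.rpow_natCast (s ^ ((k:ℝ) + 1/2)) 2,
          ← Real.rpow_natCast ((1 + s^2) ^ (-(N/2))) 2,
          ← Real.rpow_mul hs0.le, ← Real.rpow_mul h1,
          show ((k:ℝ) + 1/2) * ((2:ℕ):ℝ) = 2*(k:ℝ) + 1 by push_cast; ring,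
          show (-(N/2) * ((2:ℕ):ℝ) : ℝ) = -N by push_cast; ring]
      rw [e]
      have h2 : (1 + s^2 : ℝ) ^ (-N) ≤ (s^2 : ℝ) ^ (-N) :=
        Real.rpow_le_rpow_of_nonpos (by positivity) (by nlinarith) (by linarith)
      calc s ^ (2*(k:ℝ) + 1) * (1 + s^2) ^ (-N) ≤ s ^ (2*(k:ℝ) + 1) * (s^2 : ℝ) ^ (-N) :=
            mul_le_mul_of_nonneg_left h2 (Real.rpow_nonneg hs0.le _)
        _ = s ^ (2*(k:ℝ) + 1 - 2*N) := by
            rw [← Real.rpow_natCast s 2, ← Real.rpow_mul hs0.le, ← Real.rpow_add hs0]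
            congr 1
            push_cast
            ring
    have step2 : ∫ s in Set.Ioc r₀ r, s ^ (2*(k:ℝ) + 1 - 2*N)
        = (r ^ a - r₀ ^ a) / a := by
      rw [← intervalIntegral.integral_of_le hr.le,
        integral_rpow (Or.inr ⟨hb_ne, Set.notMem_uIcc_of_lt hr₀ hr0⟩)]
      rw [show (2*(k:ℝ) + 1 - 2*N) + 1 = a by rw [ha_def]; ring]
    have step3 : (r ^ a - r₀ ^ a) / a ≤ (r ^ a + r₀ ^ a) / |a| := by
      have hra : (0:ℝ) < r ^ a := Real.rpow_pos_of_pos hr0 a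
      have hr₀a : (0:ℝ) < r₀ ^ a := Real.rpow_pos_of_pos hr₀ a
      rcases lt_or_gt_of_ne ha with h | h
      · rw [abs_of_neg h, show (r ^ a - r₀ ^ a) / a = (r₀ ^ a - r ^ a) / (-a) from by
          rw [div_neg, ← neg_div, neg_sub]]
        gcongr <;> linarith
      · rw [abs_of_pos h]
        gcongr <;> linarith
    exact step1.trans (step2.trans_le step3)
  -- bound B
  have hB_le : B ≤ W := by
    have : B = ∫ s in Set.Ioc r₀ r, ‖w s‖ ^ 2 * (1 + s ^ 2) ^ N * s := by
      rw [hB_def]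
      exact (setIntegral_congr_fun measurableSet_Ioc hg_sq_eq).symm
    rw [this, hW_def]
    apply setIntegral_mono_set hwL
    · filter_upwards [ae_restrict_mem measurableSet_Ioi] with s hs
      exact mul_nonneg (mul_nonneg (sq_nonneg _) (Real.rpow_nonneg (by positivity) _))
        (le_of_lt (hr₀.trans hs))
    · exact (Set.Ioc_subset_Ioi_self).eventuallyLE
  -- assemble
  rw [norm_mul, Complex.norm_real, Real.norm_eq_abs, abs_of_pos (zpow_pos hr0 _), mul_pow]
  have hz : ((r ^ (-(k:ℤ) - 1) : ℝ)) ^ 2 = r ^ (-2*(k:ℝ) - 2) := by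
    rw [← Real.rpow_intCast r (-(k:ℤ) - 1), ← Real.rpow_natCast _ 2, ← Real.rpow_mul hr0.le]
    congr 1
    push_cast
    ring
  rw [hz]
  have hAB : ‖∫ s in r₀..r, ((s ^ (k + 1) : ℝ) : ℂ) * w s‖ ^ 2 ≤ (r ^ a + r₀ ^ a) / |a| * W :=
    hIsq.trans (mul_le_mul hA_le hB_le hB0 (by positivity))
  calc r ^ (-2*(k:ℝ) - 2) * ‖∫ s in r₀..r, ((s ^ (k + 1) : ℝ) : ℂ) * w s‖ ^ 2 * r
      ≤ r ^ (-2*(k:ℝ) - 2) * ((r ^ a + r₀ ^ a) / |a| * W) * r := by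
        apply mul_le_mul_of_nonneg_right _ hr0.le
        exact mul_le_mul_of_nonneg_left hAB (Real.rpow_nonneg hr0.le _)
    _ = W / |a| * (r ^ (1 - 2*N) + r₀ ^ a * r ^ (-2*(k:ℝ) - 1)) := by
        rw [show (1 - 2*N : ℝ) = (-2*(k:ℝ) - 1) + a from by rw [ha_def]; ring,
          Real.rpow_add hr0, show (-2*(k:ℝ) - 1 : ℝ) = (-2*(k:ℝ) - 2) + 1 from by ring,
          Real.rpow_add hr0, Real.rpow_one]
        ring

/-- `L₂(r₀,∞; r)` bound for the first term
`r ↦ r^{-k-1}·∫_{r₀}^r s^{k+1}·w(s) ds` of the Fourier-mode solution, in terms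
of the weighted norm `‖w‖²_{L_{2,N}(r₀,∞)}`, when `k + 1 ≠ N` and `N > 1`. -/
theorem first_term_L2_bound (r₀ N : ℝ) (hr₀ : 0 < r₀) (hN : 1 < N)
    (k : ℕ) (hk : 1 ≤ k) (hkN : (k : ℝ) + 1 ≠ N)
    (w : ℝ → ℂ) (hw : Measurable w)
    (hwL : IntegrableOn (fun s : ℝ => ‖w s‖ ^ 2 * (1 + s ^ 2) ^ N * s) (Set.Ioi r₀)) :
    (∫ r in Set.Ioi r₀,
        ‖((r ^ (-(k : ℤ) - 1) : ℝ) : ℂ) *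
            ∫ s in r₀..r, ((s ^ (k + 1) : ℝ) : ℂ) * w s‖ ^ 2 * r) ≤
      (2 / |2 * (k : ℝ) + 2 - 2 * N|) *
        (∫ s in Set.Ioi r₀, ‖w s‖ ^ 2 * (1 + s ^ 2) ^ N * s) *
        (r₀ ^ (2 - 2 * N) / (2 * N - 2) + r₀ ^ (2 - 2 * N) / (2 * (k : ℝ))) := by
  set a : ℝ := 2 * (k : ℝ) + 2 - 2 * N with ha_def
  have ha : a ≠ 0 := fun h => hkN (by rw [ha_def] at h; linarith)
  have habs : 0 < |a| := abs_pos.2 ha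
  set W : ℝ := ∫ s in Set.Ioi r₀, ‖w s‖ ^ 2 * (1 + s ^ 2) ^ N * s with hW_def
  have hW : 0 ≤ W := setIntegral_nonneg measurableSet_Ioi fun s hs =>
    mul_nonneg (mul_nonneg (sq_nonneg _) (Real.rpow_nonneg (by positivity) _))
      (le_of_lt (hr₀.trans hs))
  have hk1 : (1:ℝ) ≤ (k:ℝ) := by exact_mod_cast hk
  have h1N : (1 - 2*N : ℝ) < -1 := by linarith
  have h2k : (-2*(k:ℝ) - 1 : ℝ) < -1 := by linarith
  have hint1 : IntegrableOn (fun r : ℝ => r ^ (1 - 2*N)) (Set.Ioi r₀) :=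
    integrableOn_Ioi_rpow_of_lt h1N hr₀
  have hint2 : IntegrableOn (fun r : ℝ => r ^ (-2*(k:ℝ) - 1)) (Set.Ioi r₀) :=
    integrableOn_Ioi_rpow_of_lt h2k hr₀
  have hG_int : IntegrableOn
      (fun r : ℝ => W / |a| * (r ^ (1 - 2*N) + r₀ ^ a * r ^ (-2*(k:ℝ) - 1)))
      (Set.Ioi r₀) := (hint1.add (hint2.const_mul _)).const_mul _
  have step : (∫ r in Set.Ioi r₀,
      ‖((r ^ (-(k : ℤ) - 1) : ℝ) : ℂ) *
          ∫ s in r₀..r, ((s ^ (k + 1) : ℝ) : ℂ) * w s‖ ^ 2 * r) ≤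
      ∫ r in Set.Ioi r₀, W / |a| * (r ^ (1 - 2*N) + r₀ ^ a * r ^ (-2*(k:ℝ) - 1)) := by
    apply integral_mono_of_nonneg _ hG_int
    · filter_upwards [ae_restrict_mem measurableSet_Ioi] with r hr
      exact first_term_ptwise r₀ N hr₀ hN k hkN w hw hwL hr
    · filter_upwards [ae_restrict_mem measurableSet_Ioi] with r hr
      exact mul_nonneg (sq_nonneg _) (le_of_lt (hr₀.trans hr))
  refine step.trans ?_
  rw [MeasureTheory.integral_const_mul, integral_add hint1 (hint2.const_mul _), MeasureTheory.integral_const_mul,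
    integral_Ioi_rpow_of_lt h1N hr₀, integral_Ioi_rpow_of_lt h2k hr₀]
  have hne1 : (2 - 2*N : ℝ) ≠ 0 := by intro h; nlinarith
  have hne2 : (2*N - 2 : ℝ) ≠ 0 := by intro h; nlinarith
  have hnk : (2*(k:ℝ) : ℝ) ≠ 0 := by positivity
  have e1 : -r₀ ^ (1 - 2*N + 1) / (1 - 2*N + 1) = r₀ ^ (2 - 2*N) / (2*N - 2) := by
    rw [show (1 - 2*N + 1 : ℝ) = 2 - 2*N by ring, div_eq_div_iff hne1 hne2]
    ring
  have hprod : r₀ ^ a * r₀ ^ (-2*(k:ℝ)) = r₀ ^ (2 - 2*N) := by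
    rw [← Real.rpow_add hr₀]; congr 1; rw [ha_def]; ring
  have e2 : r₀ ^ a * (-r₀ ^ (-2*(k:ℝ) - 1 + 1) / (-2*(k:ℝ) - 1 + 1))
      = r₀ ^ (2 - 2*N) / (2*(k:ℝ)) := by
    rw [show (-2*(k:ℝ) - 1 + 1 : ℝ) = -2*(k:ℝ) by ring, ← hprod]
    field_simp
  rw [e1, e2]
  have hC1 : (0:ℝ) ≤ r₀ ^ (2 - 2*N) / (2*N - 2) :=
    div_nonneg (Real.rpow_nonneg hr₀.le _) (by linarith)
  have hC2 : (0:ℝ) ≤ r₀ ^ (2 - 2*N) / (2*(k:ℝ)) :=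
    div_nonneg (Real.rpow_nonneg hr₀.le _) (by positivity)
  have hC : (0:ℝ) ≤ r₀ ^ (2 - 2*N) / (2*N - 2) + r₀ ^ (2 - 2*N) / (2*(k:ℝ)) := by linarith
  rw [div_mul_eq_mul_div, div_mul_eq_mul_div, div_mul_eq_mul_div]
  exact (div_le_div_iff_of_pos_right habs).2 (by nlinarith [mul_nonneg hW hC])
end

section
/- Let r₀ > 0, let N > 1 be real, let k ≥ 0 be an integer, and let w : (r₀,∞) → ℂ be measurable with ‖w‖²_{L_{2,N}(r₀,∞)} = ∫_{r₀}^∞ |w(s)|²·(1+s²)^N·s ds < ∞. Then ∫_{r₀}^∞ | r^{k-1}·∫_r^∞ s^{-k+1}·w(s) ds |²·r dr ≤ ( r₀^{2-2N} / ((2N−2)·(2k + 2N − 2)) )·‖w‖²_{L_{2,N}(r₀,∞)}. -/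
open Real MeasureTheory


lemma sq_rpow' {x : ℝ} (hx : 0 ≤ x) (a : ℝ) : (x ^ a) ^ (2:ℕ) = x ^ (2*a) := by
  rw [← Real.rpow_natCast (x ^ a) 2, ← Real.rpow_mul hx]; ring_nf

lemma tail_pointwise (r₀ N : ℝ) (hr₀ : 0 < r₀) (hN : 1 < N)
    (k : ℕ) (w : ℝ → ℂ) (hw : Measurable w)
    (hwL : IntegrableOn (fun s : ℝ => ‖w s‖ ^ 2 * (1 + s ^ 2) ^ N * s) (Set.Ioi r₀))
    (r : ℝ) (hr : r₀ < r) :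
    ‖((r ^ ((k : ℤ) - 1) : ℝ) : ℂ) *
        ∫ s in Set.Ioi r, ((s ^ (-(k : ℤ) + 1) : ℝ) : ℂ) * w s‖ ^ 2 * r ≤
      ((∫ s in Set.Ioi r₀, ‖w s‖ ^ 2 * (1 + s ^ 2) ^ N * s) /
        (2 * (k : ℝ) + 2 * N - 2)) * r ^ (1 - 2 * N) := by
  have hr0 : (0:ℝ) < r := hr₀.trans hr
  set I := ∫ s in Set.Ioi r₀, ‖w s‖ ^ 2 * (1 + s ^ 2) ^ N * s with hI
  have hI0 : 0 ≤ I := setIntegral_nonneg measurableSet_Ioi fun s hs => by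
    have : (0:ℝ) < s := hr₀.trans hs
    positivity
  set C : ℝ := 2 * (k : ℝ) + 2 * N - 2 with hC
  have hC0 : 0 < C := by have : (0:ℝ) ≤ k := Nat.cast_nonneg k; nlinarith
  set g : ℝ → ℝ := fun s => s ^ ((1:ℝ) - k) * (1 + s ^ 2) ^ (-(N/2)) * s ^ (-(1/2) : ℝ) with hg
  set h : ℝ → ℝ := fun s => ‖w s‖ * (1 + s ^ 2) ^ (N/2) * s ^ ((1/2) : ℝ) with hh
  -- pointwise identity on Ioi r
  have hgh : ∀ s ∈ Set.Ioi r, ‖((s ^ (-(k : ℤ) + 1) : ℝ) : ℂ) * w s‖ = g s * h s := by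
    intro s hs
    have hs0 : (0:ℝ) < s := hr0.trans hs
    have h1 : (1:ℝ) + s ^ 2 > 0 := by positivity
    have hz : (s ^ (-(k : ℤ) + 1) : ℝ) = s ^ ((1:ℝ) - k) := by
      rw [← Real.rpow_intCast s (-(k:ℤ)+1)]; push_cast; ring_nf
    rw [norm_mul, Complex.norm_real, Real.norm_of_nonneg (by rw [hz]; positivity)]
    rw [hz]
    have e1 : (1 + s ^ 2) ^ (-(N/2)) * (1 + s ^ 2) ^ (N/2) = 1 := by
      rw [← Real.rpow_add h1]; simp
    have e2 : s ^ (-(1/2):ℝ) * s ^ ((1/2):ℝ) = 1 := by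
      rw [← Real.rpow_add hs0]; simp
    have e3 : g s * h s = s ^ ((1:ℝ) - k) * ‖w s‖ *
        ((1 + s ^ 2) ^ (-(N/2)) * (1 + s ^ 2) ^ (N/2)) *
        (s ^ (-(1/2):ℝ) * s ^ ((1/2):ℝ)) := by simp only [hg, hh]; ring
    rw [e3, e1, e2]; ring
  -- squares
  have hgsq : ∀ s ∈ Set.Ioi r, g s ^ 2 ≤ s ^ (1 - 2*(k:ℝ) - 2*N) := by
    intro s hs
    have hs0 : (0:ℝ) < s := hr0.trans hs
    have h1 : (0:ℝ) < 1 + s ^ 2 := by positivity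
    have e : g s ^ 2 = s ^ (1 - 2*(k:ℝ)) * (1 + s ^ 2) ^ (-N) := by
      simp only [hg, mul_pow, sq_rpow' hs0.le, sq_rpow' h1.le]
      rw [mul_right_comm, ← Real.rpow_add hs0,
        show 2*((1:ℝ)-k) + 2*-(1/2) = 1-2*(k:ℝ) by ring,
        show (2:ℝ)*-(N/2) = -N by ring]
    have hb : (1 + s ^ 2) ^ (-N) ≤ s ^ (-(2*N)) := by
      have h2 : (s ^ 2 : ℝ) ^ (-N) = s ^ (-(2*N)) := by
        rw [← Real.rpow_natCast s 2, ← Real.rpow_mul hs0.le]; ring_nf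
      rw [← h2]
      exact Real.rpow_le_rpow_of_nonpos (by positivity) (by nlinarith) (by linarith)
    calc g s ^ 2 = s ^ (1 - 2*(k:ℝ)) * (1 + s ^ 2) ^ (-N) := e
      _ ≤ s ^ (1 - 2*(k:ℝ)) * s ^ (-(2*N)) :=
          mul_le_mul_of_nonneg_left hb (Real.rpow_nonneg hs0.le _)
      _ = s ^ (1 - 2*(k:ℝ) - 2*N) := by rw [← Real.rpow_add hs0]; ring_nf
  have hhsq : ∀ s ∈ Set.Ioi r, h s ^ 2 = ‖w s‖ ^ 2 * (1 + s ^ 2) ^ N * s := by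
    intro s hs
    have hs0 : (0:ℝ) < s := hr0.trans hs
    have h1 : (0:ℝ) < 1 + s ^ 2 := by positivity
    simp only [hh, mul_pow, sq_rpow' hs0.le, sq_rpow' h1.le]
    rw [show (2:ℝ)*(N/2) = N by ring, show (2:ℝ)*(1/2) = 1 by ring, Real.rpow_one]
  -- measurability
  have hgm : Measurable g := by fun_prop
  have hhm : Measurable h := by fun_prop (disch := measurability)
  -- integrability of squares
  have hmaj : IntegrableOn (fun s : ℝ => s ^ (1 - 2*(k:ℝ) - 2*N)) (Set.Ioi r) :=
    integrableOn_Ioi_rpow_of_lt (by have : (0:ℝ) ≤ k := Nat.cast_nonneg k; nlinarith) hr0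
  have hInt_g2 : IntegrableOn (fun s => g s ^ 2) (Set.Ioi r) := by
    refine hmaj.mono' ((hgm.pow_const 2).aestronglyMeasurable) ?_
    filter_upwards [ae_restrict_mem measurableSet_Ioi] with s hs
    rw [Real.norm_of_nonneg (sq_nonneg _)]
    exact hgsq s hs
  have hInt_h2 : IntegrableOn (fun s => h s ^ 2) (Set.Ioi r) := by
    refine ((hwL.mono_set (Set.Ioi_subset_Ioi hr.le)).congr_fun ?_ measurableSet_Ioi)
    intro s hs; exact (hhsq s hs).symm
  -- Memℒp
  have hMg : MemLp g (ENNReal.ofReal 2) (volume.restrict (Set.Ioi r)) := by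
    rw [ENNReal.ofReal_ofNat]
    exact (memLp_two_iff_integrable_sq hgm.aestronglyMeasurable).2 hInt_g2
  have hMh : MemLp h (ENNReal.ofReal 2) (volume.restrict (Set.Ioi r)) := by
    rw [ENNReal.ofReal_ofNat]
    exact (memLp_two_iff_integrable_sq hhm.aestronglyMeasurable).2 hInt_h2
  -- Hölder / Cauchy–Schwarz
  have hCS : (∫ s in Set.Ioi r, g s * h s) ≤
      (∫ s in Set.Ioi r, g s ^ (2:ℝ)) ^ ((1:ℝ)/2) * (∫ s in Set.Ioi r, h s ^ (2:ℝ)) ^ ((1:ℝ)/2) := by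
    refine integral_mul_le_Lp_mul_Lq_of_nonneg ⟨by norm_num, by norm_num, by norm_num⟩ ?_ ?_ hMg hMh
    · filter_upwards [ae_restrict_mem measurableSet_Ioi] with s hs
      have hs0 : (0:ℝ) < s := hr0.trans hs
      simp only [hg]; positivity
    · filter_upwards [ae_restrict_mem measurableSet_Ioi] with s hs
      have hs0 : (0:ℝ) < s := hr0.trans hs
      simp only [hh]; positivity
  have hrpow2 : ∀ x : ℝ, x ^ (2:ℝ) = x ^ (2:ℕ) := fun x => by
    rw [show (2:ℝ) = ((2:ℕ):ℝ) by norm_num, Real.rpow_natCast]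
  simp only [hrpow2] at hCS
  set A := ∫ s in Set.Ioi r, g s ^ 2 with hA
  set B := ∫ s in Set.Ioi r, h s ^ 2 with hB
  have hA0 : 0 ≤ A := setIntegral_nonneg measurableSet_Ioi fun s _ => sq_nonneg _
  have hB0 : 0 ≤ B := setIntegral_nonneg measurableSet_Ioi fun s _ => sq_nonneg _
  -- bound A
  have hAle : A ≤ r ^ (-C) / C := by
    have h1 : A ≤ ∫ s in Set.Ioi r, s ^ (1 - 2*(k:ℝ) - 2*N) := by
      refine integral_mono_of_nonneg ?_ hmaj ?_
      · exact ae_of_all _ fun s => sq_nonneg _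
      · filter_upwards [ae_restrict_mem measurableSet_Ioi] with s hs
        exact hgsq s hs
    have h2 : (∫ s in Set.Ioi r, s ^ (1 - 2*(k:ℝ) - 2*N)) = r ^ (-C) / C := by
      rw [integral_Ioi_rpow_of_lt (by have : (0:ℝ) ≤ k := Nat.cast_nonneg k; nlinarith) hr0]
      rw [show (1 - 2*(k:ℝ) - 2*N) + 1 = -C by rw [hC]; ring]
      rw [neg_div, div_neg, neg_neg]
    linarith
  -- bound B
  have hBle : B ≤ I := by
    have e : B = ∫ s in Set.Ioi r, ‖w s‖ ^ 2 * (1 + s ^ 2) ^ N * s :=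
      setIntegral_congr_fun measurableSet_Ioi fun s hs => hhsq s hs
    rw [e, hI]
    refine setIntegral_mono_set hwL ?_ (HasSubset.Subset.eventuallyLE (Set.Ioi_subset_Ioi hr.le))
    filter_upwards [ae_restrict_mem measurableSet_Ioi] with s hs
    have hs0 : (0:ℝ) < s := hr₀.trans hs
    positivity
  -- the norm of the inner integral
  have hX : ‖∫ s in Set.Ioi r, ((s ^ (-(k : ℤ) + 1) : ℝ) : ℂ) * w s‖ ≤
      A ^ ((1:ℝ)/2) * B ^ ((1:ℝ)/2) := by
    refine le_trans (norm_integral_le_integral_norm _) (le_trans ?_ hCS)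
    refine le_of_eq (setIntegral_congr_fun measurableSet_Ioi fun s hs => hgh s hs)
  have hXsq : ‖∫ s in Set.Ioi r, ((s ^ (-(k : ℤ) + 1) : ℝ) : ℂ) * w s‖ ^ 2 ≤ A * B := by
    have := pow_le_pow_left₀ (norm_nonneg _) hX 2
    calc ‖∫ s in Set.Ioi r, ((s ^ (-(k:ℤ)+1) : ℝ) : ℂ) * w s‖ ^ 2
        ≤ (A ^ ((1:ℝ)/2) * B ^ ((1:ℝ)/2)) ^ 2 := this
      _ = A * B := by
          rw [mul_pow, sq_rpow' hA0, sq_rpow' hB0]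
          norm_num [Real.rpow_one]
  -- put it together
  have hzr : ‖((r ^ ((k : ℤ) - 1) : ℝ) : ℂ)‖ ^ 2 = r ^ (2*(k:ℝ) - 2) := by
    rw [Complex.norm_real, Real.norm_of_nonneg (zpow_nonneg hr0.le _),
      ← Real.rpow_intCast r ((k:ℤ)-1), sq_rpow' hr0.le]
    push_cast; ring_nf
  rw [norm_mul, mul_pow, hzr]
  calc r ^ (2*(k:ℝ)-2) * ‖∫ s in Set.Ioi r, ((s ^ (-(k:ℤ)+1) : ℝ) : ℂ) * w s‖ ^ 2 * r
      ≤ r ^ (2*(k:ℝ)-2) * (A * B) * r := by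
        have h1 := mul_le_mul_of_nonneg_left hXsq (Real.rpow_nonneg hr0.le (2*(k:ℝ)-2))
        exact mul_le_mul_of_nonneg_right h1 hr0.le
    _ ≤ r ^ (2*(k:ℝ)-2) * ((r ^ (-C) / C) * I) * r := by
        have hAB : A * B ≤ (r ^ (-C) / C) * I := mul_le_mul hAle hBle hB0 (by positivity)
        exact mul_le_mul_of_nonneg_right
          (mul_le_mul_of_nonneg_left hAB (Real.rpow_nonneg hr0.le _)) hr0.le
    _ = I / C * r ^ (1 - 2*N) := by
        have hrr : r ^ (2*(k:ℝ)-2) * r ^ (-C) * r = r ^ (1 - 2*N) := by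
          nth_rewrite 3 [show r = r ^ (1:ℝ) by rw [Real.rpow_one]]
          rw [← Real.rpow_add hr0, ← Real.rpow_add hr0]
          congr 1; rw [hC]; ring
        rw [← hrr]; ring

/-- `L₂(r₀,∞; r)` bound for the tail term
`r ↦ r^{k-1}·∫_r^∞ s^{-k+1}·w(s) ds` of the Fourier-mode solution, in terms of
the weighted norm `‖w‖²_{L_{2,N}(r₀,∞)}`, for `N > 1`. -/
theorem tail_term_L2_bound (r₀ N : ℝ) (hr₀ : 0 < r₀) (hN : 1 < N)
    (k : ℕ) (w : ℝ → ℂ) (hw : Measurable w)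
    (hwL : IntegrableOn (fun s : ℝ => ‖w s‖ ^ 2 * (1 + s ^ 2) ^ N * s) (Set.Ioi r₀)) :
    (∫ r in Set.Ioi r₀,
        ‖((r ^ ((k : ℤ) - 1) : ℝ) : ℂ) *
            ∫ s in Set.Ioi r, ((s ^ (-(k : ℤ) + 1) : ℝ) : ℂ) * w s‖ ^ 2 * r) ≤
      (r₀ ^ (2 - 2 * N) / ((2 * N - 2) * (2 * (k : ℝ) + 2 * N - 2))) *
        (∫ s in Set.Ioi r₀, ‖w s‖ ^ 2 * (1 + s ^ 2) ^ N * s) := by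
  set I := ∫ s in Set.Ioi r₀, ‖w s‖ ^ 2 * (1 + s ^ 2) ^ N * s with hI
  set C : ℝ := 2 * (k : ℝ) + 2 * N - 2 with hC
  have hC0 : 0 < C := by have : (0:ℝ) ≤ k := Nat.cast_nonneg k; nlinarith
  have hmaj : IntegrableOn (fun r : ℝ => I / C * r ^ (1 - 2*N)) (Set.Ioi r₀) :=
    (integrableOn_Ioi_rpow_of_lt (by linarith) hr₀).const_mul _
  have step : (∫ r in Set.Ioi r₀,
        ‖((r ^ ((k : ℤ) - 1) : ℝ) : ℂ) *
            ∫ s in Set.Ioi r, ((s ^ (-(k : ℤ) + 1) : ℝ) : ℂ) * w s‖ ^ 2 * r) ≤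
      ∫ r in Set.Ioi r₀, I / C * r ^ (1 - 2*N) := by
    refine integral_mono_of_nonneg ?_ hmaj ?_
    · filter_upwards [ae_restrict_mem measurableSet_Ioi] with r hrr
      have : (0:ℝ) < r := hr₀.trans hrr
      positivity
    · filter_upwards [ae_restrict_mem measurableSet_Ioi] with r hrr
      exact tail_pointwise r₀ N hr₀ hN k w hw hwL r hrr
  refine step.trans (le_of_eq ?_)
  rw [integral_const_mul, integral_Ioi_rpow_of_lt (by linarith) hr₀,
    show (1 - 2*N) + 1 = 2 - 2*N by ring]
  have h1 : (2:ℝ) - 2*N ≠ 0 := by linarith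
  have h2 : (2:ℝ)*N - 2 ≠ 0 := by linarith
  field_simp
  ring_nf
  rw [show (-1:ℝ) + N = -(1 - N) by ring, inv_neg]; ring
end

section
/- Let r₀ > 0, let N > 1 be real, let g ∈ ℂ, and let w : (r₀,∞) → ℂ be measurable with ‖w‖²_{L_{2,N}(r₀,∞)} = ∫_{r₀}^∞ |w(s)|²·(1+s²)^N·s ds < ∞. Assume the zero-circulation condition ∫_{r₀}^∞ s·w(s) ds + g = 0 (the integral converges absolutely since the weighted norm is finite). Then for every r ≥ r₀: (1/r)·∫_{r₀}^r s·w(s) ds + g/r = −(1/r)·∫_r^∞ s·w(s) ds, and | (1/r)·∫_{r₀}^r s·w(s) ds + g/r | ≤ (1/(r^N·√(2N−2)))·‖w‖_{L_{2,N}(r₀,∞)}. -/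
open Real MeasureTheory intervalIntegral

/-- under the zero-circulation condition
`∫_{r₀}^∞ s·w(s) ds + g = 0`, the zeroth Fourier mode
`(1/r)·∫_{r₀}^r s·w(s) ds + g/r` equals `−(1/r)·∫_r^∞ s·w(s) ds` and decays
like `r^{-N}`. -/
theorem zeroth_mode_decay_of_zero_circulation (r₀ N : ℝ) (hr₀ : 0 < r₀)
    (hN : 1 < N) (g : ℂ) (w : ℝ → ℂ) (hw : Measurable w)
    (hwL : IntegrableOn (fun s : ℝ => ‖w s‖ ^ 2 * (1 + s ^ 2) ^ N * s) (Set.Ioi r₀))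
    (hcirc : (∫ s in Set.Ioi r₀, (s : ℂ) * w s) + g = 0) :
    IntegrableOn (fun s : ℝ => (s : ℂ) * w s) (Set.Ioi r₀) ∧
    ∀ r : ℝ, r₀ ≤ r →
      ((1 / (r : ℂ)) * ∫ s in r₀..r, (s : ℂ) * w s) + g / (r : ℂ) =
        -((1 / (r : ℂ)) * ∫ s in Set.Ioi r, (s : ℂ) * w s) ∧
      ‖((1 / (r : ℂ)) * ∫ s in r₀..r, (s : ℂ) * w s) + g / (r : ℂ)‖ ≤
        (1 / (r ^ N * Real.sqrt (2 * N - 2))) *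
          Real.sqrt (∫ s in Set.Ioi r₀, ‖w s‖ ^ 2 * (1 + s ^ 2) ^ N * s) := by
  set W : ℝ → ℝ := fun s => ‖w s‖ ^ 2 * (1 + s ^ 2) ^ N * s with hWdef
  set A : ℝ := ∫ s in Set.Ioi r₀, W s with hAdef
  have hA0 : 0 ≤ A := by
    apply setIntegral_nonneg measurableSet_Ioi
    intro s hs
    have hs0 : (0:ℝ) < s := hr₀.trans hs
    have : (0:ℝ) ≤ (1 + s ^ 2) ^ N := Real.rpow_nonneg (by positivity) N
    positivity
  -- measurability helpers
  have hcb : Continuous fun s : ℝ => (1 + s ^ 2 : ℝ) :=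
    continuous_const.add (continuous_id.pow 2)
  have hmf : Measurable fun s : ℝ => ‖w s‖ * Real.sqrt ((1 + s ^ 2) ^ N * s) := by
    apply (hw.norm).mul
    exact (((hcb.rpow_const (fun s => Or.inl (by positivity))).mul
      continuous_id).measurable).sqrt
  have hmh : Measurable fun s : ℝ => Real.sqrt (s * (1 + s ^ 2) ^ (-N)) := by
    exact ((continuous_id.mul
      (hcb.rpow_const (fun s => Or.inl (by positivity)))).measurable).sqrt
  set f : ℝ → ℝ := fun s => ‖w s‖ * Real.sqrt ((1 + s ^ 2) ^ N * s) with hfdef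
  set h : ℝ → ℝ := fun s => Real.sqrt (s * (1 + s ^ 2) ^ (-N)) with hhdef
  have hf0 : ∀ s, 0 ≤ f s := fun s => mul_nonneg (norm_nonneg _) (Real.sqrt_nonneg _)
  have hh0 : ∀ s, 0 ≤ h s := fun s => Real.sqrt_nonneg _
  have hf2 : ∀ s : ℝ, 0 < s → f s ^ 2 = W s := by
    intro s hs
    have h1 : (0:ℝ) ≤ (1 + s ^ 2) ^ N := Real.rpow_nonneg (by positivity) N
    simp only [hfdef, hWdef, mul_pow, Real.sq_sqrt (mul_nonneg h1 hs.le)]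
    ring
  have hh2 : ∀ s : ℝ, 0 < s → h s ^ 2 = s * (1 + s ^ 2) ^ (-N) := by
    intro s hs
    have h1 : (0:ℝ) ≤ (1 + s ^ 2) ^ (-N) := Real.rpow_nonneg (by positivity) _
    simp only [hhdef, Real.sq_sqrt (mul_nonneg hs.le h1)]
  have hfh : ∀ s : ℝ, 0 < s → ‖(s : ℂ) * w s‖ = f s * h s := by
    intro s hs
    have h1 : (0:ℝ) ≤ (1 + s ^ 2) ^ N := Real.rpow_nonneg (by positivity) N
    have key : Real.sqrt ((1 + s ^ 2) ^ N * s) * Real.sqrt (s * (1 + s ^ 2) ^ (-N)) = s := by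
      rw [← Real.sqrt_mul (mul_nonneg h1 hs.le)]
      have : (1 + s ^ 2) ^ N * s * (s * (1 + s ^ 2) ^ (-N)) = s ^ 2 *
          ((1 + s ^ 2) ^ N * (1 + s ^ 2) ^ (-N)) := by ring
      rw [this, ← Real.rpow_add (by positivity : (0:ℝ) < 1 + s ^ 2)]
      simp [Real.sqrt_sq hs.le]
    simp only [hfdef, hhdef, norm_mul, Complex.norm_real, Real.norm_eq_abs,
      abs_of_pos hs]
    rw [mul_assoc, key]
    ring
  have hh2le : ∀ s : ℝ, 0 < s → h s ^ 2 ≤ s ^ (1 - 2 * N) := by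
    intro s hs
    rw [hh2 s hs]
    have h1 : (1 + s ^ 2) ^ (-N) ≤ (s ^ 2) ^ (-N) :=
      Real.rpow_le_rpow_of_nonpos (by positivity) (by linarith) (by linarith)
    have h2 : (s ^ 2 : ℝ) ^ (-N) = s ^ (2 * (-N)) := by
      rw [← Real.rpow_natCast s 2, ← Real.rpow_mul hs.le]
      norm_num
    calc s * (1 + s ^ 2) ^ (-N) ≤ s * (s ^ 2) ^ (-N) :=
          mul_le_mul_of_nonneg_left h1 hs.le
      _ = s ^ (1:ℝ) * s ^ (2 * (-N)) := by rw [h2, Real.rpow_one]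
      _ = s ^ (1 - 2 * N) := by rw [← Real.rpow_add hs]; ring_nf
  -- the key estimate for every r ≥ r₀
  have key : ∀ r : ℝ, r₀ ≤ r →
      IntegrableOn (fun s : ℝ => (s : ℂ) * w s) (Set.Ioi r) ∧
      ‖∫ s in Set.Ioi r, (s : ℂ) * w s‖ ≤
        Real.sqrt A * Real.sqrt (r ^ (2 - 2 * N) / (2 * N - 2)) := by
    intro r hr
    have hrpos : 0 < r := hr₀.trans_le hr
    have hpos : ∀ s ∈ Set.Ioi r, (0:ℝ) < s := fun s hs => hrpos.trans hs
    have hsub : Set.Ioi r ⊆ Set.Ioi r₀ := Set.Ioi_subset_Ioi hr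
    have hWintr : IntegrableOn W (Set.Ioi r) := hwL.mono_set hsub
    -- integrability of f^2 on Ioi r
    have hf2int : IntegrableOn (fun s => f s ^ 2) (Set.Ioi r) := by
      apply hWintr.congr_fun _ measurableSet_Ioi
      intro s hs; exact (hf2 s (hpos s hs)).symm
    -- integrability of h^2 on Ioi r
    have hrint : IntegrableOn (fun s : ℝ => s ^ (1 - 2 * N)) (Set.Ioi r) :=
      integrableOn_Ioi_rpow_of_lt (by linarith) hrpos
    have hh2int : IntegrableOn (fun s => h s ^ 2) (Set.Ioi r) := by
      apply Integrable.mono' hrint ((hmh.pow_const 2).aestronglyMeasurable)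
      rw [ae_restrict_iff' measurableSet_Ioi]
      filter_upwards with s hs
      rw [Real.norm_eq_abs, abs_of_nonneg (sq_nonneg _)]
      exact hh2le s (hpos s hs)
    -- Memℒp
    have hfL2 : MemLp f (ENNReal.ofReal 2) (volume.restrict (Set.Ioi r)) := by
      rw [show (ENNReal.ofReal 2) = 2 by norm_num]
      exact (memLp_two_iff_integrable_sq hmf.aestronglyMeasurable).mpr hf2int
    have hhL2 : MemLp h (ENNReal.ofReal 2) (volume.restrict (Set.Ioi r)) := by
      rw [show (ENNReal.ofReal 2) = 2 by norm_num]
      exact (memLp_two_iff_integrable_sq hmh.aestronglyMeasurable).mpr hh2int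
    -- integrability of s * w s
    have hint : IntegrableOn (fun s : ℝ => (s : ℂ) * w s) (Set.Ioi r) := by
      apply Integrable.mono' ((hf2int.add hh2int).div_const 2)
        ((Complex.measurable_ofReal.mul hw).aestronglyMeasurable)
      rw [ae_restrict_iff' measurableSet_Ioi]
      filter_upwards with s hs
      rw [Pi.mul_apply, hfh s (hpos s hs)]
      simp only [Pi.add_apply]
      have := two_mul_le_add_sq (f s) (h s)
      nlinarith [hf0 s, hh0 s]
    refine ⟨hint, ?_⟩
    -- Cauchy–Schwarz
    have hCS : (∫ s in Set.Ioi r, f s * h s) ≤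
        (∫ s in Set.Ioi r, f s ^ 2) ^ (1/2 : ℝ) * (∫ s in Set.Ioi r, h s ^ 2) ^ (1/2 : ℝ) := by
      have := integral_mul_le_Lp_mul_Lq_of_nonneg (Real.holderConjugate_iff (p := 2) (q := 2) |>.mpr
        (by norm_num)) (Filter.Eventually.of_forall hf0) (Filter.Eventually.of_forall hh0)
        hfL2 hhL2
      have e2 : ∀ u : ℝ → ℝ, (∫ s in Set.Ioi r, u s ^ (2:ℝ)) = ∫ s in Set.Ioi r, u s ^ 2 := by
        intro u
        congr 1
        funext s
        rw [show (2:ℝ) = ((2:ℕ):ℝ) by norm_num, Real.rpow_natCast]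
      rw [e2 f, e2 h] at this
      exact this
    have hnormint : ‖∫ s in Set.Ioi r, (s : ℂ) * w s‖ ≤ ∫ s in Set.Ioi r, f s * h s := by
      calc ‖∫ s in Set.Ioi r, (s : ℂ) * w s‖ ≤ ∫ s in Set.Ioi r, ‖(s : ℂ) * w s‖ :=
            norm_integral_le_integral_norm _
        _ = ∫ s in Set.Ioi r, f s * h s := by
            apply setIntegral_congr_fun measurableSet_Ioi
            intro s hs; exact hfh s (hpos s hs)
    -- bound the two factors
    have hfle : (∫ s in Set.Ioi r, f s ^ 2) ≤ A := by
      have : (∫ s in Set.Ioi r, f s ^ 2) = ∫ s in Set.Ioi r, W s := by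
        apply setIntegral_congr_fun measurableSet_Ioi
        intro s hs; exact hf2 s (hpos s hs)
      rw [this, hAdef]
      apply setIntegral_mono_set hwL
      · rw [Filter.EventuallyLE, ae_restrict_iff' measurableSet_Ioi]
        filter_upwards with s hs
        have hs0 : (0:ℝ) < s := hr₀.trans hs
        have : (0:ℝ) ≤ (1 + s ^ 2) ^ N := Real.rpow_nonneg (by positivity) N
        simp only [hWdef]; positivity
      · exact Filter.Eventually.of_forall hsub
    have hhle : (∫ s in Set.Ioi r, h s ^ 2) ≤ r ^ (2 - 2 * N) / (2 * N - 2) := by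
      have h1 : (∫ s in Set.Ioi r, h s ^ 2) ≤ ∫ s in Set.Ioi r, s ^ (1 - 2 * N) := by
        apply setIntegral_mono_on hh2int hrint measurableSet_Ioi
        intro s hs; exact hh2le s (hpos s hs)
      have h2 : (∫ s in Set.Ioi r, s ^ (1 - 2 * N)) = r ^ (2 - 2 * N) / (2 * N - 2) := by
        rw [integral_Ioi_rpow_of_lt (by linarith) hrpos]
        rw [show (1 - 2 * N + 1) = 2 - 2 * N by ring]
        rw [div_eq_div_iff (by linarith) (by linarith)]
        ring
      linarith
    -- combine
    have hCS2 : (∫ s in Set.Ioi r, f s * h s) ≤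
        Real.sqrt A * Real.sqrt (r ^ (2 - 2 * N) / (2 * N - 2)) := by
      have hi1 : (0:ℝ) ≤ ∫ s in Set.Ioi r, f s ^ 2 :=
        setIntegral_nonneg measurableSet_Ioi (fun s _ => sq_nonneg _)
      have hi2 : (0:ℝ) ≤ ∫ s in Set.Ioi r, h s ^ 2 :=
        setIntegral_nonneg measurableSet_Ioi (fun s _ => sq_nonneg _)
      calc (∫ s in Set.Ioi r, f s * h s) ≤
          (∫ s in Set.Ioi r, f s ^ 2) ^ (1/2 : ℝ) * (∫ s in Set.Ioi r, h s ^ 2) ^ (1/2 : ℝ) := hCS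
        _ ≤ A ^ (1/2 : ℝ) * (r ^ (2 - 2 * N) / (2 * N - 2)) ^ (1/2 : ℝ) := by
            apply mul_le_mul (Real.rpow_le_rpow hi1 hfle (by norm_num))
              (Real.rpow_le_rpow hi2 hhle (by norm_num))
              (Real.rpow_nonneg hi2 _) (Real.rpow_nonneg hA0 _)
        _ = Real.sqrt A * Real.sqrt (r ^ (2 - 2 * N) / (2 * N - 2)) := by
            rw [Real.sqrt_eq_rpow, Real.sqrt_eq_rpow]
    exact le_trans hnormint hCS2
  refine ⟨(key r₀ le_rfl).1, ?_⟩
  intro r hr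
  have hrpos : 0 < r := hr₀.trans_le hr
  obtain ⟨hintr, hbound⟩ := key r hr
  have hint₀ := (key r₀ le_rfl).1
  -- splitting of the integral
  have hsplit : (∫ s in r₀..r, (s : ℂ) * w s) + (∫ s in Set.Ioi r, (s : ℂ) * w s) =
      ∫ s in Set.Ioi r₀, (s : ℂ) * w s := by
    rw [intervalIntegral.integral_of_le hr]
    rw [← Set.Ioc_union_Ioi_eq_Ioi hr,
      setIntegral_union (Set.Ioc_disjoint_Ioi le_rfl) measurableSet_Ioi
        (hint₀.mono_set Set.Ioc_subset_Ioi_self) hintr]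
  have hrC : (r : ℂ) ≠ 0 := by exact_mod_cast hrpos.ne'
  have hiden : ((1 / (r : ℂ)) * ∫ s in r₀..r, (s : ℂ) * w s) + g / (r : ℂ) =
      -((1 / (r : ℂ)) * ∫ s in Set.Ioi r, (s : ℂ) * w s) := by
    have hAg : (∫ s in r₀..r, (s : ℂ) * w s) + g =
        -(∫ s in Set.Ioi r, (s : ℂ) * w s) := by
      linear_combination hcirc + hsplit
    field_simp
    linear_combination hcirc + hsplit
  refine ⟨hiden, ?_⟩
  rw [hiden]
  have hnorm : ‖-((1 / (r : ℂ)) * ∫ s in Set.Ioi r, (s : ℂ) * w s)‖ =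
      (1 / r) * ‖∫ s in Set.Ioi r, (s : ℂ) * w s‖ := by
    rw [norm_neg, norm_mul]
    congr 1
    rw [norm_div, norm_one, Complex.norm_real, Real.norm_eq_abs, abs_of_pos hrpos]
  rw [hnorm]
  have hsqrt : Real.sqrt (r ^ (2 - 2 * N) / (2 * N - 2)) =
      r ^ (1 - N) / Real.sqrt (2 * N - 2) := by
    rw [Real.sqrt_div (Real.rpow_nonneg hrpos.le _)]
    congr 1
    rw [Real.sqrt_eq_rpow, ← Real.rpow_mul hrpos.le,
      show (2 - 2 * N) * (1 / 2 : ℝ) = 1 - N by ring]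
  have hs2N : 0 < Real.sqrt (2 * N - 2) := Real.sqrt_pos.mpr (by linarith)
  have hrN : 0 < r ^ N := Real.rpow_pos_of_pos hrpos N
  calc (1 / r) * ‖∫ s in Set.Ioi r, (s : ℂ) * w s‖ ≤
      (1 / r) * (Real.sqrt A * Real.sqrt (r ^ (2 - 2 * N) / (2 * N - 2))) := by
        apply mul_le_mul_of_nonneg_left hbound (by positivity)
    _ = (1 / (r ^ N * Real.sqrt (2 * N - 2))) * Real.sqrt A := by
        rw [hsqrt, Real.rpow_sub hrpos, Real.rpow_one]
        field_simp
end

section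
/- Identify ℂ with ℝ² via z = x₁ + i·x₂, and for a real-differentiable map v : ℂ → ℂ define div v = ∂(Re v)/∂x₁ + ∂(Im v)/∂x₂ and curl v = ∂(Im v)/∂x₁ − ∂(Re v)/∂x₂. Let U ⊆ ℂ be open, let ψ : U → ℂ be holomorphic on U, and let v : ℂ → ℂ be real-differentiable at ψ(x) for a point x ∈ U. Define the pulled-back vector field v̂ : U → ℂ by v̂(x) = conj(ψ′(x))·v(ψ(x)) (this is the complex form of v̂ = (Dψ)ᵀ·(v ∘ ψ), with (Dψ)ᵀ the transpose of the real Jacobian of ψ). Then v̂ is real-differentiable at x and: div v̂(x) = |ψ′(x)|²·(div v)(ψ(x)) and curl v̂(x) = |ψ′(x)|²·(curl v)(ψ(x)). -/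
open Complex

/-- Divergence of a planar vector field `v : ℂ → ℂ` (identified with
`(Re v, Im v)` on `ℝ²`): `∂(Re v)/∂x₁ + ∂(Im v)/∂x₂`. -/
noncomputable def planarDiv (v : ℂ → ℂ) (x : ℂ) : ℝ :=
  (fderiv ℝ v x 1).re + (fderiv ℝ v x Complex.I).im

/-- Scalar curl (vorticity) of a planar vector field `v : ℂ → ℂ`:
`∂(Im v)/∂x₁ − ∂(Re v)/∂x₂`. -/
noncomputable def planarCurl (v : ℂ → ℂ) (x : ℂ) : ℝ :=
  (fderiv ℝ v x 1).im - (fderiv ℝ v x Complex.I).re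

/-- the conformal pullback `v̂ = conj(ψ′)·(v ∘ ψ)` of a planar
vector field `v` by a holomorphic map `ψ` satisfies
`div v̂ = |ψ′|²·(div v) ∘ ψ` and `curl v̂ = |ψ′|²·(curl v) ∘ ψ`. -/
theorem planarDiv_planarCurl_pullback (U : Set ℂ) (hU : IsOpen U)
    (ψ : ℂ → ℂ) (hψ : DifferentiableOn ℂ ψ U) (x : ℂ) (hx : x ∈ U)
    (v : ℂ → ℂ) (hv : DifferentiableAt ℝ v (ψ x))
    (vhat : ℂ → ℂ)
    (hvhat : ∀ z : ℂ, vhat z = (starRingEnd ℂ) (deriv ψ z) * v (ψ z)) :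
    DifferentiableAt ℝ vhat x ∧
    planarDiv vhat x = ‖deriv ψ x‖ ^ 2 * planarDiv v (ψ x) ∧
    planarCurl vhat x = ‖deriv ψ x‖ ^ 2 * planarCurl v (ψ x) := by
  have hψx : DifferentiableAt ℂ ψ x := hψ.differentiableAt (hU.mem_nhds hx)
  have hd : DifferentiableAt ℂ (deriv ψ) x :=
    (((hψ.analyticOnNhd hU).deriv) x hx).differentiableAt
  set a := deriv ψ x with ha
  set b := deriv (deriv ψ) x with hb
  set A := fderiv ℝ v (ψ x) with hA
  set w := v (ψ x) with hw
  have hψF : HasFDerivAt ψ (ContinuousLinearMap.restrictScalars ℝ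
      (ContinuousLinearMap.smulRight (1 : ℂ →L[ℂ] ℂ) a)) x :=
    (hψx.hasDerivAt.hasFDerivAt).restrictScalars ℝ
  have hdF : HasFDerivAt (deriv ψ) (ContinuousLinearMap.restrictScalars ℝ
      (ContinuousLinearMap.smulRight (1 : ℂ →L[ℂ] ℂ) b)) x :=
    (hd.hasDerivAt.hasFDerivAt).restrictScalars ℝ
  have hconj : HasFDerivAt (fun z => (starRingEnd ℂ) (deriv ψ z))
      ((Complex.conjCLE : ℂ ≃L[ℝ] ℂ).toContinuousLinearMap.comp
        (ContinuousLinearMap.restrictScalars ℝ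
          (ContinuousLinearMap.smulRight (1 : ℂ →L[ℂ] ℂ) b))) x :=
    ((Complex.conjCLE : ℂ ≃L[ℝ] ℂ).toContinuousLinearMap.hasFDerivAt).comp x hdF
  have hvc : HasFDerivAt (fun z => v (ψ z)) (A.comp (ContinuousLinearMap.restrictScalars ℝ
      (ContinuousLinearMap.smulRight (1 : ℂ →L[ℂ] ℂ) a))) x :=
    (hv.hasFDerivAt).comp x hψF
  have hmul := hconj.mul hvc
  have hL : HasFDerivAt vhat
      ((starRingEnd ℂ) a • (A.comp (ContinuousLinearMap.restrictScalars ℝ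
          (ContinuousLinearMap.smulRight (1 : ℂ →L[ℂ] ℂ) a))) +
        w • ((Complex.conjCLE : ℂ ≃L[ℝ] ℂ).toContinuousLinearMap.comp
          (ContinuousLinearMap.restrictScalars ℝ
            (ContinuousLinearMap.smulRight (1 : ℂ →L[ℂ] ℂ) b)))) x := by
    have hfun : vhat = fun z => (starRingEnd ℂ) (deriv ψ z) * v (ψ z) := funext hvhat
    rw [hfun]
    exact hmul
  have key : ∀ u : ℂ, A u = u.re • A 1 + u.im • A I := by
    intro u
    have hu : u = u.re • (1 : ℂ) + u.im • I := by
      simp [Complex.real_smul]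
    conv_lhs => rw [hu]
    rw [map_add, map_smul, map_smul]
  have h1 : fderiv ℝ vhat x 1 = (starRingEnd ℂ) a * A a + w * (starRingEnd ℂ) b := by
    rw [hL.fderiv]
    simp [smul_eq_mul]
  have hI : fderiv ℝ vhat x I =
      (starRingEnd ℂ) a * A (I * a) + w * (starRingEnd ℂ) (I * b) := by
    rw [hL.fderiv]
    simp [smul_eq_mul]
  have hnorm : ‖a‖ ^ 2 = a.re ^ 2 + a.im ^ 2 := by
    rw [Complex.sq_norm, Complex.normSq_apply]
    ring
  refine ⟨hL.differentiableAt, ?_, ?_⟩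
  · rw [planarDiv, planarDiv, h1, hI, key a, key (I * a), hnorm, ← hA]
    simp [Complex.mul_re, Complex.mul_im, Complex.add_re, Complex.add_im,
      Complex.smul_re, Complex.smul_im]
    ring
  · rw [planarCurl, planarCurl, h1, hI, key a, key (I * a), hnorm, ← hA]
    simp [Complex.mul_re, Complex.mul_im, Complex.add_re, Complex.add_im,
      Complex.smul_re, Complex.smul_im]
    ring
end
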